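/- arXiv:2204.10589 — 10 statements merged into one kernel-verified Lean document; each statement's English description precedes it below -/
import Mathlib

section
/- Let A be a countable finiteness space. For v ⊆ |A| define v† : 𝔉(A) → {0,1} by v†(x) = 1 iff x ∩ v ≠ ∅. Then the assignment v ↦ v† is a bijection from 𝔉(A)^⊥ onto the set of F-linear maps 𝔉(A) → {0,1}. -/
/-- The finiteness dual of a collection of subsets of `α`. -/
def FinDual {α : Type} (X : Set (Set α)) : Set (Set α) :=
  { u | ∀ x ∈ X, (x ∩ u).Finite }

/-- A family `(x_i)` of members of `F` is summable (with sum `⋃ i, x i`) if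
each point belongs to only finitely many members and the union lies in `F`. -/
def FSummable {α : Type} (F : Set (Set α)) {ι : Type} (x : ι → Set α) : Prop :=
  (∀ i, x i ∈ F) ∧ (∀ a, {i | a ∈ x i}.Finite) ∧ (⋃ i, x i) ∈ F

/-- An F-linear map from `𝔉(A)` to `{0,1}` (represented as `Prop`-valued):
it sends `∅` to `0` and sums to sums (in the Σ-semiring `F = {0,1}` with
finite sums only). -/
def FLinearFun {α : Type} (F : Set (Set α)) (h : {x : Set α // x ∈ F} → Prop) :
    Prop :=
  (∀ he : (∅ : Set α) ∈ F, ¬ h ⟨∅, he⟩) ∧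
  ∀ (ι : Type), Countable ι → ∀ (x : ι → Set α) (hx : FSummable F x),
    {i | h ⟨x i, hx.1 i⟩}.Finite ∧
    (h ⟨⋃ i, x i, hx.2.2⟩ ↔ ∃ i, h ⟨x i, hx.1 i⟩)

lemma singleton_mem_of_bidual {α : Type} {F : Set (Set α)}
    (hF : FinDual (FinDual F) = F) (a : α) : {a} ∈ F := by
  rw [← hF]
  intro x _
  exact (Set.finite_singleton a).subset Set.inter_subset_right

lemma summable_singletons {α : Type} {F : Set (Set α)}
    (hF : FinDual (FinDual F) = F) {x : Set α} (hx : x ∈ F) :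
    FSummable F (fun i : x => ({(i : α)} : Set α)) := by
  refine ⟨fun i => singleton_mem_of_bidual hF i, fun a => ?_, ?_⟩
  · apply Set.Subsingleton.finite
    intro i hi j hj
    exact Subtype.ext (hi.symm.trans hj)
  · rw [Set.iUnion_of_singleton_coe]
    exact hx

/-- For a countable finiteness space `A = (α, F)`, the map `v ↦ v†`, where
`v†(x) = 1` iff `x ∩ v ≠ ∅`, is a bijection from `F^⊥` onto the set of
F-linear maps `𝔉(A) → {0,1}`. -/
theorem stmt1 {α : Type} [Countable α] (F : Set (Set α))
    (hF : FinDual (FinDual F) = F) :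
    Set.BijOn
      (fun (v : Set α) => fun (x : {x : Set α // x ∈ F}) => (x.1 ∩ v).Nonempty)
      (FinDual F) {h | FLinearFun F h} := by
  refine ⟨?_, ?_, ?_⟩
  · -- MapsTo
    intro v hv
    refine ⟨fun he hne => by simp at hne, fun ι hι x hx => ?_⟩
    have hfin : ((⋃ i, x i) ∩ v).Finite := hv _ hx.2.2
    constructor
    · have hsub : {i | ((x i) ∩ v).Nonempty} ⊆
          ⋃ a ∈ ((⋃ i, x i) ∩ v), {i | a ∈ x i} := by
        rintro i ⟨a, ha, hav⟩
        exact Set.mem_biUnion ⟨Set.mem_iUnion.2 ⟨i, ha⟩, hav⟩ ha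
      exact ((hfin.biUnion (fun a _ => hx.2.1 a)).subset hsub)
    · constructor
      · rintro ⟨a, ha, hav⟩
        obtain ⟨i, hi⟩ := Set.mem_iUnion.1 ha
        exact ⟨i, a, hi, hav⟩
      · rintro ⟨i, a, ha, hav⟩
        exact ⟨a, Set.mem_iUnion.2 ⟨i, ha⟩, hav⟩
  · -- InjOn
    intro v _ w _ heq
    ext a
    have := congrFun heq ⟨{a}, singleton_mem_of_bidual hF a⟩
    simp only [Set.singleton_inter_nonempty, eq_iff_iff] at this
    exact this
  · -- SurjOn
    rintro h hh
    set v : Set α := {a | h ⟨{a}, singleton_mem_of_bidual hF a⟩} with hv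
    have key : ∀ (x : Set α) (hx : x ∈ F),
        (h ⟨x, hx⟩ ↔ ∃ i : x, h ⟨{(i : α)}, singleton_mem_of_bidual hF i⟩) ∧
        {i : x | h ⟨{(i : α)}, singleton_mem_of_bidual hF i⟩}.Finite := by
      intro x hx
      have hs := summable_singletons hF hx
      have := hh.2 x inferInstance _ hs
      have hxeq : (⟨⋃ i : x, ({(i : α)} : Set α), hs.2.2⟩ : {y : Set α // y ∈ F}) =
          ⟨x, hx⟩ := Subtype.ext (Set.iUnion_of_singleton_coe x)
      exact ⟨hxeq ▸ this.2, this.1⟩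
    refine ⟨v, ?_, ?_⟩
    · -- v ∈ FinDual F
      intro x hx
      have : x ∩ v = (fun i : x => (i : α)) ''
          {i : x | h ⟨{(i : α)}, singleton_mem_of_bidual hF i⟩} := by
        ext a
        constructor
        · rintro ⟨hax, hav⟩
          exact ⟨⟨a, hax⟩, hav, rfl⟩
        · rintro ⟨i, hi, rfl⟩
          exact ⟨i.2, hi⟩
      rw [this]
      exact ((key x hx).2).image _
    · -- v† = h
      funext x
      obtain ⟨x, hx⟩ := x
      simp only [eq_iff_iff]
      rw [(key x hx).1]
      constructor
      · rintro ⟨a, hax, hav⟩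
        exact ⟨⟨a, hax⟩, hav⟩
      · rintro ⟨i, hi⟩
        exact ⟨i, i.2, hi⟩
end

section
/- Let A and B be probabilistic coherence spaces. Then the assignment f ↦ f̂|_{P(A)} is a bijection from the set of morphisms f : A → B of probabilistic coherence spaces onto the set of [0,1]-linear functions P(A) → P(B). -/
/-!
A morphism `f` acts on `P(A)` by `f̂`, which is `[0,1]`-linear because sums in `[0, ∞]` commute.
Conversely, a `[0,1]`-linear `g` is determined by its values on the Dirac vectors `s • δ_a ∈ P(A)`:
homogeneity makes `g (s • δ_a) b = F (a, b) * s` for a single matrix `F`, and since `P(A)` is a lower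
set, every `x ∈ P(A)` is the summable family `(x a • δ_a)_a`, so `g x = F̂ x`. Uniqueness of `F`
follows by testing on one positive multiple of each `δ_a`.
-/

/-- The dual of a set `P` of `ℝ≥0`-valued vectors over a countable set `α`:
all `u` such that `∑_a x(a)·u(a) ≤ 1` (sum in `[0,∞]`) for every `x ∈ P`. -/
def pDual {α : Type} (P : Set (α → NNReal)) : Set (α → NNReal) :=
  { u | ∀ x ∈ P, (∑' a, (x a : ENNReal) * (u a : ENNReal)) ≤ 1 }

open Classical in
/-- `(α, P)` is a probabilistic coherence space: `P = P^⊥⊥`, every coordinate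
is bounded on `P`, and every coordinate is hit by a positive multiple of a
Dirac vector. -/
def IsPCS {α : Type} (P : Set (α → NNReal)) : Prop :=
  pDual (pDual P) = P ∧
  (∀ a, ∃ C : NNReal, ∀ x ∈ P, x a ≤ C) ∧
  (∀ a, ∃ r : NNReal, 0 < r ∧ (fun a' => if a' = a then r else 0) ∈ P)

/-- The action `f̂` of a matrix `f : α × β → ℝ≥0` on a vector. -/
noncomputable def fhat {α β : Type} (f : α × β → NNReal) (x : α → NNReal) :
    β → NNReal :=
  fun b => (∑' a, (f (a, b) : ENNReal) * (x a : ENNReal)).toNNReal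

/-- `f` is a morphism of probabilistic coherence spaces `(α,P) → (β,Q)`:
for every `x ∈ P` the sums defining `f̂(x)` are finite and `f̂(x) ∈ Q`. -/
def IsPCSMor {α β : Type} (P : Set (α → NNReal)) (Q : Set (β → NNReal))
    (f : α × β → NNReal) : Prop :=
  ∀ x ∈ P, (∀ b, (∑' a, (f (a, b) : ENNReal) * (x a : ENNReal)) ≠ ⊤) ∧
    fhat f x ∈ Q

/-- A `[0,1]`-linear function `P → Q` between (the webs of) probabilistic
coherence spaces: it commutes with scalar multiplication by `r ∈ [0,1]` and
preserves sums of summable countable families. -/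
def UnitLin {α β : Type} (P : Set (α → NNReal)) (Q : Set (β → NNReal))
    (h : {x : α → NNReal // x ∈ P} → {y : β → NNReal // y ∈ Q}) : Prop :=
  (∀ r : NNReal, r ≤ 1 → ∀ (x : {x : α → NNReal // x ∈ P})
      (hm : (fun a => r * x.1 a) ∈ P),
      (h ⟨fun a => r * x.1 a, hm⟩).1 = fun b => r * (h x).1 b) ∧
  (∀ (ι : Type), Countable ι →
    ∀ (x : ι → {x : α → NNReal // x ∈ P}) (s : {x : α → NNReal // x ∈ P}),
      (∀ a, (∑' i, ((x i).1 a : ENNReal)) = (s.1 a : ENNReal)) →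
      (∀ b, (∑' i, ((h (x i)).1 b : ENNReal)) = ((h s).1 b : ENNReal)))

open scoped ENNReal NNReal

lemma pDual_isLowerSet {α : Type} (R : Set (α → ℝ≥0)) : IsLowerSet (pDual R) :=
  fun _ _ hle hu x hx =>
    (ENNReal.tsum_le_tsum fun a => by gcongr; exact hle a).trans (hu x hx)

lemma IsPCS.isLowerSet {α : Type} {P : Set (α → ℝ≥0)} (hP : IsPCS P) : IsLowerSet P :=
  hP.1 ▸ pDual_isLowerSet _

lemma IsPCS.exists_pos_single_mem {α : Type} [DecidableEq α] {P : Set (α → ℝ≥0)} (hP : IsPCS P)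
    (a : α) : ∃ r : ℝ≥0, 0 < r ∧ Pi.single a r ∈ P := by
  obtain ⟨r, hr, hmem⟩ := hP.2.2 a
  refine ⟨r, hr, ?_⟩
  convert hmem using 1
  funext a'
  rw [Pi.single_apply]
  congr

section fhat

variable {α β : Type} (f : α × β → ℝ≥0)

lemma coe_fhat_apply {x : α → ℝ≥0} {b : β} (h : ∑' a, (f (a, b) : ℝ≥0∞) * x a ≠ ∞) :
    (fhat f x b : ℝ≥0∞) = ∑' a, (f (a, b) : ℝ≥0∞) * x a :=
  ENNReal.coe_toNNReal h

lemma fhat_const_mul (r : ℝ≥0) (x : α → ℝ≥0) :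
    fhat f (fun a => r * x a) = fun b => r * fhat f x b := by
  funext b
  simp only [fhat, ENNReal.coe_mul, mul_left_comm _ (r : ℝ≥0∞), ENNReal.tsum_mul_left,
    ENNReal.toNNReal_mul, ENNReal.toNNReal_coe]

lemma fhat_single [DecidableEq α] (a : α) (s : ℝ≥0) (b : β) :
    fhat f (Pi.single a s) b = f (a, b) * s := by
  rw [fhat, tsum_eq_single a fun a' ha' => by simp [ha']]
  simp

lemma tsum_fhat_apply {ι : Type} {x : ι → α → ℝ≥0} {s : α → ℝ≥0}
    (hs : ∀ a, ∑' i, (x i a : ℝ≥0∞) = s a) (b : β)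
    (hx : ∀ i, ∑' a, (f (a, b) : ℝ≥0∞) * x i a ≠ ∞)
    (hsb : ∑' a, (f (a, b) : ℝ≥0∞) * s a ≠ ∞) :
    ∑' i, (fhat f (x i) b : ℝ≥0∞) = fhat f s b :=
  calc ∑' i, (fhat f (x i) b : ℝ≥0∞)
      = ∑' i, ∑' a, (f (a, b) : ℝ≥0∞) * x i a := tsum_congr fun i => coe_fhat_apply f (hx i)
    _ = ∑' a, (f (a, b) : ℝ≥0∞) * ∑' i, (x i a : ℝ≥0∞) := by
        rw [ENNReal.tsum_comm]; simp only [ENNReal.tsum_mul_left]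
    _ = fhat f s b := by simp only [hs, coe_fhat_apply f hsb]

lemma eq_of_fhat_single_eq [DecidableEq α] {f g : α × β → ℝ≥0} {r : α → ℝ≥0}
    (hr : ∀ a, r a ≠ 0) (h : ∀ a, fhat f (Pi.single a (r a)) = fhat g (Pi.single a (r a))) :
    f = g := by
  funext ⟨a, b⟩
  have hab := congrFun (h a) b
  rw [fhat_single, fhat_single] at hab
  exact mul_right_cancel₀ (hr a) hab

end fhat

lemma IsPCSMor.unitLin {α β : Type} {P : Set (α → ℝ≥0)} {Q : Set (β → ℝ≥0)}
    {f : α × β → ℝ≥0} (hf : IsPCSMor P Q f) :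
    UnitLin P Q fun x => ⟨fhat f x.1, (hf x.1 x.2).2⟩ :=
  ⟨fun r _ x _ => fhat_const_mul f r x.1, fun _ _ x s hs b =>
    tsum_fhat_apply f hs b (fun i => (hf _ (x i).2).1 b) ((hf _ s.2).1 b)⟩

section UnitLin

variable {α β : Type} {P : Set (α → ℝ≥0)} {Q : Set (β → ℝ≥0)}
  {g : {x : α → ℝ≥0 // x ∈ P} → {y : β → ℝ≥0 // y ∈ Q}}

lemma UnitLin.apply_eq_const_mul (hg : UnitLin P Q g) {r : ℝ≥0} (hr : r ≤ 1)
    (x y : {x : α → ℝ≥0 // x ∈ P}) (hxy : ∀ a, y.1 a = r * x.1 a) :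
    (g y).1 = fun b => r * (g x).1 b := by
  obtain ⟨y, hy⟩ := y
  obtain rfl : y = fun a => r * x.1 a := funext hxy
  exact hg.1 r hr x hy

lemma UnitLin.apply_single_mul_of_le [DecidableEq α] (hg : UnitLin P Q g) {a : α} {s t : ℝ≥0}
    (hs : Pi.single a s ∈ P) (ht : Pi.single a t ∈ P) (hst : s ≤ t) (b : β) :
    (g ⟨_, hs⟩).1 b * t = (g ⟨_, ht⟩).1 b * s := by
  rcases eq_or_ne t 0 with rfl | ht0
  · obtain rfl : s = 0 := nonpos_iff_eq_zero.mp hst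
    rfl
  have hsingle : ∀ a', (Pi.single a s : α → ℝ≥0) a' = s / t * (Pi.single a t : α → ℝ≥0) a' :=
    fun a' => by
      simp only [Pi.single_apply]
      split_ifs <;> simp [div_mul_cancel₀ s ht0]
  rw [hg.apply_eq_const_mul (div_le_one_of_le₀ hst t.2) ⟨_, ht⟩ ⟨_, hs⟩ hsingle,
    mul_right_comm, div_mul_cancel₀ s ht0, mul_comm]

variable [DecidableEq α]

noncomputable def matrixOfUnitLin (g : {x : α → ℝ≥0 // x ∈ P} → {y : β → ℝ≥0 // y ∈ Q})
    (r : α → ℝ≥0) (hr : ∀ a, Pi.single a (r a) ∈ P) : α × β → ℝ≥0 :=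
  fun p => (g ⟨Pi.single p.1 (r p.1), hr p.1⟩).1 p.2 / r p.1

variable {r : α → ℝ≥0} {hr : ∀ a, Pi.single a (r a) ∈ P}

lemma UnitLin.apply_single (hg : UnitLin P Q g) (hr0 : ∀ a, r a ≠ 0) {a : α} {s : ℝ≥0}
    (hs : Pi.single a s ∈ P) (b : β) :
    (g ⟨_, hs⟩).1 b = matrixOfUnitLin g r hr (a, b) * s := by
  apply mul_right_cancel₀ (hr0 a)
  rw [matrixOfUnitLin, mul_right_comm, div_mul_cancel₀ _ (hr0 a)]
  rcases le_total s (r a) with hle | hle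
  · exact hg.apply_single_mul_of_le hs (hr a) hle b
  · exact (hg.apply_single_mul_of_le (hr a) hs hle b).symm

lemma UnitLin.tsum_matrixOfUnitLin_mul [Countable α] (hg : UnitLin P Q g) (hP : IsLowerSet P)
    (hr0 : ∀ a, r a ≠ 0) (x : {x : α → ℝ≥0 // x ∈ P}) (b : β) :
    ∑' a, (matrixOfUnitLin g r hr (a, b) : ℝ≥0∞) * x.1 a = (g x).1 b := by
  have hmem : ∀ a, Pi.single a (x.1 a) ∈ P := fun a =>
    hP (fun a' => by by_cases h : a' = a <;> simp [h]) x.2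
  have hsum : ∀ a', ∑' a, ((Pi.single a (x.1 a) : α → ℝ≥0) a' : ℝ≥0∞) = x.1 a' := fun a' => by
    simp [Pi.single_apply, eq_comm (a := a'), apply_ite]
  calc ∑' a, (matrixOfUnitLin g r hr (a, b) : ℝ≥0∞) * x.1 a
      = ∑' a, ((g ⟨_, hmem a⟩).1 b : ℝ≥0∞) :=
        tsum_congr fun a => by rw [hg.apply_single hr0 (hmem a), ENNReal.coe_mul]
    _ = (g x).1 b := hg.2 α inferInstance _ x hsum b

lemma UnitLin.fhat_matrixOfUnitLin [Countable α] (hg : UnitLin P Q g) (hP : IsLowerSet P)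
    (hr0 : ∀ a, r a ≠ 0) (x : {x : α → ℝ≥0 // x ∈ P}) :
    fhat (matrixOfUnitLin g r hr) x.1 = (g x).1 := by
  funext b
  rw [fhat, hg.tsum_matrixOfUnitLin_mul hP hr0, ENNReal.toNNReal_coe]

lemma UnitLin.isPCSMor_matrixOfUnitLin [Countable α] (hg : UnitLin P Q g) (hP : IsLowerSet P)
    (hr0 : ∀ a, r a ≠ 0) : IsPCSMor P Q (matrixOfUnitLin g r hr) := fun x hx =>
  ⟨fun b => hg.tsum_matrixOfUnitLin_mul hP hr0 ⟨x, hx⟩ b ▸ ENNReal.coe_ne_top,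
    hg.fhat_matrixOfUnitLin hP hr0 ⟨x, hx⟩ ▸ (g ⟨x, hx⟩).2⟩

end UnitLin

theorem stmt4_general {α β : Type} [Countable α]
    (P : Set (α → NNReal)) (Q : Set (β → NNReal))
    (hP : IsPCS P) :
    (∀ f : α × β → NNReal, IsPCSMor P Q f →
      ∃ g : {x : α → NNReal // x ∈ P} → {y : β → NNReal // y ∈ Q},
        UnitLin P Q g ∧ ∀ x : {x : α → NNReal // x ∈ P}, (g x).1 = fhat f x.1) ∧
    (∀ g : {x : α → NNReal // x ∈ P} → {y : β → NNReal // y ∈ Q}, UnitLin P Q g →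
      ∃! f : α × β → NNReal, IsPCSMor P Q f ∧
        ∀ x : {x : α → NNReal // x ∈ P}, (g x).1 = fhat f x.1) := by
  classical
  refine ⟨fun f hf => ⟨_, hf.unitLin, fun _ => rfl⟩, fun g hg => ?_⟩
  choose r hr_pos hr using hP.exists_pos_single_mem
  have hr0 : ∀ a, r a ≠ 0 := fun a => (hr_pos a).ne'
  have hF := hg.fhat_matrixOfUnitLin (hr := hr) hP.isLowerSet hr0
  refine ⟨matrixOfUnitLin g r hr,
    ⟨hg.isPCSMor_matrixOfUnitLin hP.isLowerSet hr0, fun x => (hF x).symm⟩, ?_⟩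
  rintro f ⟨-, hf⟩
  exact eq_of_fhat_single_eq hr0 fun a => (hf ⟨_, hr a⟩).symm.trans (hF _).symm

/-- For probabilistic coherence spaces `(α,P)` and `(β,Q)`, the assignment
`f ↦ f̂|_P` is a bijection from morphisms `A → B` onto `[0,1]`-linear
functions `P → Q`. -/
theorem stmt4 {α β : Type} [Countable α] [Countable β]
    (P : Set (α → NNReal)) (Q : Set (β → NNReal))
    (hP : IsPCS P) (hQ : IsPCS Q) :
    (∀ f : α × β → NNReal, IsPCSMor P Q f →
      ∃ g : {x : α → NNReal // x ∈ P} → {y : β → NNReal // y ∈ Q},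
        UnitLin P Q g ∧ ∀ x : {x : α → NNReal // x ∈ P}, (g x).1 = fhat f x.1) ∧
    (∀ g : {x : α → NNReal // x ∈ P} → {y : β → NNReal // y ∈ Q}, UnitLin P Q g →
      ∃! f : α × β → NNReal, IsPCSMor P Q f ∧
        ∀ x : {x : α → NNReal // x ∈ P}, (g x).1 = fhat f x.1) :=
  stmt4_general P Q hP
end

section
/- Let f : A → B and g : B → C be morphisms of probabilistic coherence spaces. Then for every a ∈ |A| and c ∈ |C| the sum ∑_{b∈|B|} g(b,c)·f(a,b) is finite, the matrix (g∘f)(a,c) := ∑_{b∈|B|} g(b,c)·f(a,b) is a morphism A → C of probabilistic coherence spaces, and (g∘f)^(x) = ĝ(f̂(x)) for every x ∈ P(A). -/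
/-- Composition of morphisms of probabilistic coherence spaces: the matrix
`(g∘f)(a,c) = ∑_b g(b,c)·f(a,b)` has finite entries, is a morphism `A → C`,
and satisfies `(g∘f)^ = ĝ ∘ f̂` on `P`. -/
theorem stmt5 {α β γ : Type} [Countable α] [Countable β] [Countable γ]
    (P : Set (α → NNReal)) (Q : Set (β → NNReal)) (Rc : Set (γ → NNReal))
    (hP : IsPCS P) (hQ : IsPCS Q) (hR : IsPCS Rc)
    (f : α × β → NNReal) (g : β × γ → NNReal)
    (hf : IsPCSMor P Q f) (hg : IsPCSMor Q Rc g) :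
    (∀ (a : α) (c : γ), (∑' b, (g (b, c) : ENNReal) * (f (a, b) : ENNReal)) ≠ ⊤) ∧
    IsPCSMor P Rc
      (fun p => (∑' b, (g (b, p.2) : ENNReal) * (f (p.1, b) : ENNReal)).toNNReal) ∧
    (∀ x ∈ P,
      fhat (fun p => (∑' b, (g (b, p.2) : ENNReal) * (f (p.1, b) : ENNReal)).toNNReal) x
        = fhat g (fhat f x)) := by
  classical
  have key : ∀ (a : α) (c : γ),
      (∑' b, (g (b, c) : ENNReal) * (f (a, b) : ENNReal)) ≠ ⊤ := by
    intro a c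
    obtain ⟨r, hr, hmem⟩ := hP.2.2 a
    obtain ⟨hfin, hQmem⟩ := hf _ hmem
    obtain ⟨hgfin, -⟩ := hg _ hQmem
    have hb : ∀ b, ((fhat f (fun a' => if a' = a then r else 0) b : NNReal) : ENNReal)
        = (f (a, b) : ENNReal) * (r : ENNReal) := by
      intro b
      have h1 : (∑' a', (f (a', b) : ENNReal) *
          (((fun a' => if a' = a then r else 0) a' : NNReal) : ENNReal))
          = (f (a, b) : ENNReal) * (r : ENNReal) := by
        rw [tsum_eq_single a]
        · simp
        · intro a' ha'; simp [ha']
      simp only [fhat, h1]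
      rw [← ENNReal.coe_mul, ENNReal.toNNReal_coe]
    have h2 := hgfin c
    have h3 : (∑' b, (g (b, c) : ENNReal) * ((fhat f (fun a' => if a' = a then r else 0) b : NNReal) : ENNReal))
        = (∑' b, (g (b, c) : ENNReal) * (f (a, b) : ENNReal)) * (r : ENNReal) := by
      rw [← ENNReal.tsum_mul_right]
      exact tsum_congr fun b => by rw [hb b, mul_assoc]
    rw [h3] at h2
    intro htop
    rw [htop, ENNReal.top_mul (by exact_mod_cast hr.ne')] at h2
    exact h2 rfl
  have main : ∀ x ∈ P, ∀ c : γ,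
      (∑' a, (((∑' b, (g (b, c) : ENNReal) * (f (a, b) : ENNReal)).toNNReal : NNReal) : ENNReal) * (x a : ENNReal))
        = ∑' b, (g (b, c) : ENNReal) * ((fhat f x b : NNReal) : ENNReal) := by
    intro x hx c
    obtain ⟨hffin, hQmem⟩ := hf x hx
    calc (∑' a, (((∑' b, (g (b, c) : ENNReal) * (f (a, b) : ENNReal)).toNNReal : NNReal) : ENNReal) * (x a : ENNReal))
        = ∑' a, (∑' b, (g (b, c) : ENNReal) * (f (a, b) : ENNReal)) * (x a : ENNReal) := by
          exact tsum_congr fun a => by rw [ENNReal.coe_toNNReal (key a c)]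
      _ = ∑' a, ∑' b, (g (b, c) : ENNReal) * (f (a, b) : ENNReal) * (x a : ENNReal) := by
          exact tsum_congr fun a => by rw [ENNReal.tsum_mul_right]
      _ = ∑' b, ∑' a, (g (b, c) : ENNReal) * (f (a, b) : ENNReal) * (x a : ENNReal) := by
          exact ENNReal.tsum_comm
      _ = ∑' b, (g (b, c) : ENNReal) * ∑' a, (f (a, b) : ENNReal) * (x a : ENNReal) := by
          exact tsum_congr fun b => by
            rw [← ENNReal.tsum_mul_left]
            exact tsum_congr fun a => by rw [mul_assoc]
      _ = ∑' b, (g (b, c) : ENNReal) * ((fhat f x b : NNReal) : ENNReal) := by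
          exact tsum_congr fun b => by rw [fhat, ENNReal.coe_toNNReal (hffin b)]
  refine ⟨key, ?_, ?_⟩
  · intro x hx
    obtain ⟨hffin, hQmem⟩ := hf x hx
    obtain ⟨hgfin, hRmem⟩ := hg _ hQmem
    constructor
    · intro c
      rw [main x hx c]
      exact hgfin c
    · have : fhat (fun p => (∑' b, (g (b, p.2) : ENNReal) * (f (p.1, b) : ENNReal)).toNNReal) x
          = fhat g (fhat f x) := by
        funext c
        show (∑' a, (((∑' b, (g (b, c) : ENNReal) * (f (a, b) : ENNReal)).toNNReal : NNReal) : ENNReal) * (x a : ENNReal)).toNNReal = _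
        rw [main x hx c]
        rfl
      rw [this]
      exact hRmem
  · intro x hx
    funext c
    show (∑' a, (((∑' b, (g (b, c) : ENNReal) * (f (a, b) : ENNReal)).toNNReal : NNReal) : ENNReal) * (x a : ENNReal)).toNNReal = _
    rw [main x hx c]
    rfl
end

section
/- Let M be a Σ-monoid and x, y ∈ M. If the binary sum x + y is defined and equals 0, then x = 0 and y = 0. -/
/-- A Σ-monoid: a set with a partial countable sum, represented via `Option`. -/
structure SigmaMonoid (M : Type) where
  zero : M
  sum : (ℕ → M) → Option M
  sum_unit : ∀ (x : ℕ → M) (j : ℕ), (∀ i, i ≠ j → x i = zero) → sum x = some (x j)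
  sum_perm : ∀ (I J : Set ℕ) (σ : ↥(Iᶜ) ≃ ↥(Jᶜ)) (x y : ℕ → M),
      (∀ i ∈ I, x i = zero) → (∀ j ∈ J, y j = zero) →
      (∀ i : ↥(Iᶜ), x i.1 = y (σ i).1) → sum x = sum y
  sum_assoc : ∀ (σ : ℕ × ℕ ≃ ℕ) (x s : ℕ → M),
      (∀ j, sum (fun k => x (σ (j, k))) = some (s j)) → sum x = sum s
  sum_assoc_inner : ∀ (σ : ℕ × ℕ ≃ ℕ) (x : ℕ → M) (v : M),
      sum x = some v → ∀ j, ∃ w, sum (fun k => x (σ (j, k))) = some w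

/-- The (partial) binary sum `x + y`, i.e. the sum of the family `(x, y, 0, 0, …)`. -/
def SigmaMonoid.add {M : Type} (S : SigmaMonoid M) (x y : M) : Option M :=
  S.sum (fun n => if n = 0 then x else if n = 1 then y else S.zero)

/-- A Σ-monoid homomorphism. -/
def SigmaHom {M N : Type} (S : SigmaMonoid M) (T : SigmaMonoid N) (f : M → N) : Prop :=
  f S.zero = T.zero ∧
  ∀ (x : ℕ → M) (v : M), S.sum x = some v → T.sum (fun i => f (x i)) = some (f v)

/-- `gfun` enumerates the naturals that are 2 or 3 mod 4. -/
def gfun (m : ℕ) : ℕ := 4 * (m / 2) + 2 + m % 2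

lemma gfun_mod (m : ℕ) : gfun m % 4 = 2 + m % 2 := by
  unfold gfun; omega

/-- Bijection for grouping A: row j covers 4j, 4j+1 (at k=0,1), fillers elsewhere. -/
noncomputable def sigA : ℕ × ℕ ≃ ℕ where
  toFun p := if p.2 = 0 then 4 * p.1 else if p.2 = 1 then 4 * p.1 + 1
    else gfun (Nat.pairEquiv (p.1, p.2 - 2))
  invFun n := if n % 4 = 0 then (n / 4, 0) else if n % 4 = 1 then (n / 4, 1)
    else ((Nat.pairEquiv.symm (2 * (n / 4) + (n % 4 - 2))).1,
          (Nat.pairEquiv.symm (2 * (n / 4) + (n % 4 - 2))).2 + 2)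
  left_inv := by
    rintro ⟨j, k⟩
    rcases Nat.lt_or_ge k 2 with hk | hk
    · interval_cases k
      · have h1 : 4 * j % 4 = 0 := by omega
        have h2 : 4 * j / 4 = j := by omega
        simp [h1, h2]
      · have h1 : ¬ ((4 * j + 1) % 4 = 0) := by omega
        have h2 : (4 * j + 1) % 4 = 1 := by omega
        have h3 : (4 * j + 1) / 4 = j := by omega
        simp [h1, h2, h3]
    · have hk0 : ¬ k = 0 := by omega
      have hk1 : ¬ k = 1 := by omega
      simp only [hk0, hk1, if_false]
      set m := Nat.pairEquiv (j, k - 2) with hm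
      have hg : gfun m = 4 * (m / 2) + 2 + m % 2 := rfl
      have h4 : ¬ gfun m % 4 = 0 := by omega
      have h5 : ¬ gfun m % 4 = 1 := by omega
      simp only [h4, h5, if_false]
      have h6 : 2 * (gfun m / 4) + (gfun m % 4 - 2) = m := by omega
      rw [h6, hm, Equiv.symm_apply_apply]
      simp only [Prod.mk.injEq]
      exact ⟨trivial, by omega⟩
  right_inv := by
    intro n
    by_cases h0 : n % 4 = 0
    · have h2 : 4 * (n / 4) = n := by omega
      simp [h0, h2]
    by_cases h1 : n % 4 = 1
    · have h2 : 4 * (n / 4) + 1 = n := by omega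
      simp [h0, h1, h2]
    · simp only [h0, h1, if_false]
      set m := 2 * (n / 4) + (n % 4 - 2) with hm
      have e0 : ¬ ((Nat.pairEquiv.symm m).2 + 2 = 0) := by omega
      have e1 : ¬ ((Nat.pairEquiv.symm m).2 + 2 = 1) := by omega
      simp only [e0, e1, if_false, Nat.add_sub_cancel]
      have hrw : Nat.pairEquiv ((Nat.pairEquiv.symm m).1, (Nat.pairEquiv.symm m).2)
          = m := by rw [Prod.mk.eta, Equiv.apply_symm_apply]
      rw [hrw]
      have hg : gfun m = 4 * (m / 2) + 2 + m % 2 := rfl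
      omega

/-- Bijection for grouping B: row 0 covers 0 and 2 (k=0,1); row j+1 covers
4j+1 and 4j+4 (k=0,1); fillers elsewhere. -/
noncomputable def sigB : ℕ × ℕ ≃ ℕ where
  toFun p := if p.2 = 0 then (if p.1 = 0 then 0 else 4 * (p.1 - 1) + 1)
    else if p.2 = 1 then (if p.1 = 0 then 2 else 4 * p.1)
    else gfun (Nat.pairEquiv (p.1, p.2 - 2) + 1)
  invFun n := if n = 0 then (0, 0) else if n = 2 then (0, 1)
    else if n % 4 = 1 then (n / 4 + 1, 0)
    else if n % 4 = 0 then (n / 4, 1)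
    else ((Nat.pairEquiv.symm (2 * (n / 4) + (n % 4 - 2) - 1)).1,
          (Nat.pairEquiv.symm (2 * (n / 4) + (n % 4 - 2) - 1)).2 + 2)
  left_inv := by
    rintro ⟨j, k⟩
    rcases Nat.lt_or_ge k 2 with hk | hk
    · interval_cases k
      · by_cases hj : j = 0
        · simp [hj]
        · simp only [if_pos rfl, hj, if_false]
          have e1 : ¬ (4 * (j - 1) + 1 = 0) := by omega
          have e2 : ¬ (4 * (j - 1) + 1 = 2) := by omega
          have e3 : (4 * (j - 1) + 1) % 4 = 1 := by omega
          have e4 : (4 * (j - 1) + 1) / 4 + 1 = j := by omega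
          simp [e1, e2, e3, e4]
      · by_cases hj : j = 0
        · simp [hj]
        · have hne : (1 : ℕ) ≠ 0 := by omega
          simp only [hne, if_false, if_pos rfl, hj]
          have e1 : ¬ (4 * j = 0) := by omega
          have e2 : ¬ (4 * j = 2) := by omega
          have e3 : ¬ (4 * j % 4 = 1) := by omega
          have e4 : 4 * j % 4 = 0 := by omega
          have e5 : 4 * j / 4 = j := by omega
          simp [e1, e2, e3, e4, e5]
    · have hk0 : ¬ k = 0 := by omega
      have hk1 : ¬ k = 1 := by omega
      simp only [hk0, hk1, if_false]
      set m := Nat.pairEquiv (j, k - 2) with hm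
      have hg : gfun (m + 1) = 4 * ((m + 1) / 2) + 2 + (m + 1) % 2 := rfl
      have e1 : ¬ (gfun (m + 1) = 0) := by omega
      have e2 : ¬ (gfun (m + 1) = 2) := by omega
      have e3 : ¬ (gfun (m + 1) % 4 = 1) := by omega
      have e4 : ¬ (gfun (m + 1) % 4 = 0) := by omega
      simp only [e1, e2, e3, e4, if_false]
      have h6 : 2 * (gfun (m + 1) / 4) + (gfun (m + 1) % 4 - 2) - 1 = m := by omega
      rw [h6, hm, Equiv.symm_apply_apply]
      simp only [Prod.mk.injEq]
      exact ⟨trivial, by omega⟩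
  right_inv := by
    intro n
    by_cases h0 : n = 0
    · simp [h0]
    by_cases h2 : n = 2
    · simp [h0, h2]
    simp only [h0, h2, if_false]
    by_cases hm1 : n % 4 = 1
    · simp only [hm1, if_pos rfl]
      have e1 : ¬ (n / 4 + 1 = 0) := by omega
      have e2 : 4 * (n / 4 + 1 - 1) + 1 = n := by omega
      have e3 : 4 * (n / 4) + 1 = n := by omega
      simp [e1, e2, e3]
    by_cases hm0 : n % 4 = 0
    · simp only [hm1, hm0, if_false, if_pos rfl]
      have e1 : ¬ (n / 4 = 0) := by omega
      have e2 : 4 * (n / 4) = n := by omega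
      have hne : (1 : ℕ) ≠ 0 := by omega
      simp [hne, e1, e2]
    · simp only [hm1, hm0, if_false]
      set m := 2 * (n / 4) + (n % 4 - 2) - 1 with hm
      have e0 : ¬ ((Nat.pairEquiv.symm m).2 + 2 = 0) := by omega
      have e1 : ¬ ((Nat.pairEquiv.symm m).2 + 2 = 1) := by omega
      simp only [e0, e1, if_false, Nat.add_sub_cancel]
      have hrw : Nat.pairEquiv ((Nat.pairEquiv.symm m).1, (Nat.pairEquiv.symm m).2)
          = m := by rw [Prod.mk.eta, Equiv.apply_symm_apply]
      rw [hrw]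
      have hg : gfun (m + 1) = 4 * ((m + 1) / 2) + 2 + (m + 1) % 2 := rfl
      omega

/-- A family with values `x` at `p`, `y` at `q` (p ≠ q) and zero elsewhere sums
to `x + y`. -/
lemma pair_sum {M : Type} (S : SigmaMonoid M) (x y : M) (p q : ℕ) (hpq : p ≠ q)
    (r : ℕ → M) (hp : r p = x) (hq : r q = y)
    (h0 : ∀ n, n ≠ p → n ≠ q → r n = S.zero) :
    S.sum r = S.add x y := by
  unfold SigmaMonoid.add
  refine (S.sum_perm {n | n ≠ 0 ∧ n ≠ 1} {n | n ≠ p ∧ n ≠ q}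
    ⟨fun i => ⟨if i.1 = 0 then p else q, ?_⟩,
     fun j => ⟨if j.1 = p then 0 else 1, ?_⟩, ?_, ?_⟩
    (fun n => if n = 0 then x else if n = 1 then y else S.zero) r ?_ ?_ ?_).symm
  · by_cases h : i.1 = 0 <;> simp [h, Set.mem_compl_iff] <;> tauto
  · by_cases h : j.1 = p <;> simp [h, Set.mem_compl_iff] <;> tauto
  · rintro ⟨i, hi⟩
    simp only [Set.mem_compl_iff, Set.mem_setOf_eq, not_and_or, not_ne_iff] at hi
    rcases hi with hi | hi <;> subst hi <;> simp [hpq, Ne.symm hpq]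
  · rintro ⟨j, hj⟩
    simp only [Set.mem_compl_iff, Set.mem_setOf_eq, not_and_or, not_ne_iff] at hj
    rcases hj with hj | hj <;> subst hj <;> simp [hpq, Ne.symm hpq]
  · intro i hi
    simp only [Set.mem_setOf_eq] at hi
    simp [hi.1, hi.2]
  · intro j hj
    exact h0 j hj.1 hj.2
  · rintro ⟨i, hi⟩
    simp only [Set.mem_compl_iff, Set.mem_setOf_eq, not_and_or, not_ne_iff] at hi
    rcases hi with hi | hi <;> subst hi <;> simp [hp, hq]

/-- If the binary sum `x + y` is defined in a Σ-monoid and equals `0`,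
then `x = 0` and `y = 0`. -/
theorem stmt6 {M : Type} (S : SigmaMonoid M) (x y : M)
    (h : S.add x y = some S.zero) : x = S.zero ∧ y = S.zero := by
  -- the swindle family x, y, 0, 0, x, y, 0, 0, ...
  set z : ℕ → M := fun n => if n % 4 = 0 then x else if n % 4 = 1 then y else S.zero
    with hz
  have hz0 : ∀ n, n % 4 = 0 → z n = x := fun n hn => by simp [hz, hn]
  have hz1 : ∀ n, n % 4 = 1 → z n = y := fun n hn => by simp [hz, hn]
  have hzz : ∀ n, n % 4 ≠ 0 → n % 4 ≠ 1 → z n = S.zero := fun n h0 h1 => by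
    simp [hz, h0, h1]
  -- grouping A: each row sums to x + y = 0
  have hA : S.sum z = S.sum (fun _ => S.zero) := by
    apply S.sum_assoc sigA
    intro j
    have hrow := pair_sum S x y 0 1 (by omega) (fun k => z (sigA (j, k)))
      (by apply hz0
          have : sigA (j, 0) = 4 * j := rfl
          omega)
      (by apply hz1
          have : sigA (j, 1) = 4 * j + 1 := rfl
          omega)
      (by intro n hn0 hn1
          have hval : sigA (j, n) = gfun (Nat.pairEquiv (j, n - 2)) := by
            show (if n = 0 then _ else _) = _
            simp [hn0, hn1]
          have h2 := gfun_mod (Nat.pairEquiv (j, n - 2))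
          exact hzz _ (by omega) (by omega))
    rw [hrow, h]
  -- grouping B: row 0 sums to x, other rows to 0
  have hB : S.sum z = S.sum (fun j => if j = 0 then x else S.zero) := by
    apply S.sum_assoc sigB
    intro j
    by_cases hj : j = 0
    · subst hj
      have hrow := S.sum_unit (fun k => z (sigB (0, k))) 0 ?_
      · have h00 : z (sigB (0, 0)) = x := by
          apply hz0
          have : sigB (0, 0) = 0 := rfl
          omega
        rw [hrow, h00]
        simp
      · intro i hi
        show z (sigB (0, i)) = S.zero
        by_cases hi1 : i = 1
        · apply hzz
          · have : sigB (0, i) = 2 := by rw [hi1]; rfl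
            omega
          · have : sigB (0, i) = 2 := by rw [hi1]; rfl
            omega
        · have hval : sigB (0, i) = gfun (Nat.pairEquiv (0, i - 2) + 1) := by
            show (if i = 0 then _ else _) = _
            simp [hi, hi1]
          have h2 := gfun_mod (Nat.pairEquiv (0, i - 2) + 1)
          exact hzz _ (by omega) (by omega)
    · have hrow := pair_sum S x y 1 0 (by omega) (fun k => z (sigB (j, k)))
        (by apply hz0
            have : sigB (j, 1) = 4 * j := by
              simp [sigB, hj]
            omega)
        (by apply hz1
            have : sigB (j, 0) = 4 * (j - 1) + 1 := by
              simp [sigB, hj]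
            omega)
        (by intro n hn1 hn0
            have hval : sigB (j, n) = gfun (Nat.pairEquiv (j, n - 2) + 1) := by
              show (if n = 0 then _ else _) = _
              simp [hn0, hn1]
            have h2 := gfun_mod (Nat.pairEquiv (j, n - 2) + 1)
            exact hzz _ (by omega) (by omega))
      rw [hrow, h, if_neg hj]
  have hzero : S.sum (fun _ : ℕ => S.zero) = some S.zero := by
    simpa using S.sum_unit (fun _ => S.zero) 0 (fun _ _ => rfl)
  have hxsum : S.sum (fun j : ℕ => if j = 0 then x else S.zero) = some x := by
    have := S.sum_unit (fun j : ℕ => if j = 0 then x else S.zero) 0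
      (fun i hi => by simp [hi])
    simpa using this
  have hx : x = S.zero := by
    have : some x = some S.zero := by rw [← hxsum, ← hB, hA, hzero]
    exact Option.some.inj this
  refine ⟨hx, ?_⟩
  have hy : S.add x y = some y := by
    unfold SigmaMonoid.add
    have := S.sum_unit (fun n => if n = 0 then x else if n = 1 then y else S.zero) 1
      (fun i hi => by
        by_cases hi0 : i = 0
        · simp [hi0, hx]
        · simp [hi0, hi])
    simpa using this
  rw [hy] at h
  exact Option.some.inj h
end

section
/- Let M be a Σ-monoid. Define M_∞ on the set M ⊎ {∞} with the same zero, by declaring the sum of a family (z_i) to be x ∈ M if every z_i lies in M and Σ_i z_i = x in M, and to be ∞ otherwise (i.e. if some z_i = ∞, or all z_i lie in M but their sum is undefined in M). Then M_∞ is a complete Σ-monoid and the inclusion M → M_∞ is an injective Σ-monoid homomorphism. In particular, every Σ-monoid embeds into a complete Σ-monoid. -/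
open Classical in
/-- The total sum on `Option M`: if all entries are `some`, take the `M`-sum
(which may itself be `none` = undefined = ∞), otherwise `none` (= ∞). -/
noncomputable def infSum {M : Type} (S : SigmaMonoid M) (z : ℕ → Option M) : Option M :=
  if ∀ i, (z i).isSome then S.sum (fun i => (z i).getD S.zero) else none

lemma infSum_all_some {M : Type} (S : SigmaMonoid M) (z : ℕ → Option M) (x : ℕ → M)
    (h : ∀ i, z i = some (x i)) : infSum S z = S.sum x := by
  unfold infSum
  rw [if_pos (fun i => by rw [h i]; rfl)]
  congr 1
  funext i
  rw [h i]
  rfl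

lemma infSum_none {M : Type} (S : SigmaMonoid M) (z : ℕ → Option M) (i0 : ℕ)
    (h : z i0 = none) : infSum S z = none := by
  unfold infSum
  rw [if_neg]
  intro hall
  have := hall i0
  rw [h] at this
  simp at this

/-- Every Σ-monoid `M` embeds into a complete Σ-monoid `M_∞` carried by
`Option M` (with `none` playing the role of `∞`): the sum of a family is
`some v` whenever all members lie in `M` and their sum in `M` is `v`, and
is `∞` otherwise; the inclusion `some : M → Option M` is an injective
Σ-monoid homomorphism. -/
theorem stmt9 {M : Type} (S : SigmaMonoid M) :
    ∃ T : SigmaMonoid (Option M),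
      T.zero = some S.zero ∧
      (∀ (z : ℕ → Option M) (x : ℕ → M) (v : M),
        (∀ i, z i = some (x i)) → S.sum x = some v → T.sum z = some (some v)) ∧
      (∀ z : ℕ → Option M,
        (¬ ∃ x : ℕ → M, (∀ i, z i = some (x i)) ∧ ∃ v, S.sum x = some v) →
        T.sum z = some none) ∧
      (∀ z : ℕ → Option M, ∃ w, T.sum z = some w) ∧
      SigmaHom S T (fun a => some a) ∧
      Function.Injective (fun a : M => some a) := by
  classical
  refine ⟨⟨some S.zero, fun z => some (infSum S z), ?_, ?_, ?_, ?_⟩, ?_⟩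
  · -- sum_unit
    intro z j hz
    refine congrArg some ?_
    rcases hzj : z j with _ | a
    · exact infSum_none S z j hzj
    · rw [infSum_all_some S z (fun i => if i = j then a else S.zero)]
      · have := S.sum_unit (fun i => if i = j then a else S.zero) j
          (fun i hi => by simp [hi])
        simpa using this
      · intro i
        by_cases hi : i = j
        · subst hi; simp [hzj]
        · simp [hi, hz i hi]
  · -- sum_perm
    intro I J σ z y hzI hyJ hσ
    refine congrArg some ?_
    by_cases hall : ∀ i, (z i).isSome
    · -- all z some; then all y some too
      have hyall : ∀ j, (y j).isSome := by
        intro j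
        by_cases hj : j ∈ J
        · rw [hyJ j hj]; rfl
        · obtain ⟨i, hi⟩ := σ.surjective ⟨j, hj⟩
          have := hσ i
          rw [hi] at this
          rw [← this]
          exact hall i.1
      set x : ℕ → M := fun i => (z i).getD S.zero with hx
      set y' : ℕ → M := fun j => (y j).getD S.zero with hy'
      have hz' : ∀ i, z i = some (x i) := fun i => by
        cases hzi : z i
        · exact absurd (hzi ▸ hall i) (by simp)
        · simp [hx, hzi]
      have hy'' : ∀ j, y j = some (y' j) := fun j => by
        cases hyj : y j
        · exact absurd (hyj ▸ hyall j) (by simp)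
        · simp [hy', hyj]
      rw [infSum_all_some S z x hz', infSum_all_some S y y' hy'']
      apply S.sum_perm I J σ
      · intro i hi
        have := hzI i hi
        rw [hz' i] at this
        exact Option.some_injective _ this
      · intro j hj
        have := hyJ j hj
        rw [hy'' j] at this
        exact Option.some_injective _ this
      · intro i
        have h1 := hσ i
        rw [hz' i.1, hy'' (σ i).1] at h1
        exact Option.some_injective _ h1
    · push_neg at hall
      obtain ⟨i0, hi0⟩ := hall
      have hzi0 : z i0 = none := Option.not_isSome_iff_eq_none.mp hi0
      have hi0I : i0 ∉ I := fun h => by rw [hzI i0 h] at hzi0; simp at hzi0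
      have hy0 : y (σ ⟨i0, hi0I⟩).1 = none := by
        rw [← hσ ⟨i0, hi0I⟩]; exact hzi0
      rw [infSum_none S z i0 hzi0, infSum_none S y _ hy0]
  · -- sum_assoc
    intro σ z s hrows
    refine congrArg some ?_
    have hs : ∀ j, s j = infSum S (fun k => z (σ (j, k))) :=
      fun j => (Option.some_injective _ (hrows j)).symm
    by_cases hall : ∀ i, (z i).isSome
    · set x : ℕ → M := fun i => (z i).getD S.zero with hx
      have hz' : ∀ i, z i = some (x i) := fun i => by
        cases hzi : z i
        · exact absurd (hzi ▸ hall i) (by simp)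
        · simp [hx, hzi]
      have hrow : ∀ j, infSum S (fun k => z (σ (j, k))) = S.sum (fun k => x (σ (j, k))) :=
        fun j => infSum_all_some S _ _ (fun k => hz' _)
      rw [infSum_all_some S z x hz']
      by_cases hSx : ∃ v, S.sum x = some v
      · obtain ⟨v, hv⟩ := hSx
        choose w hw using S.sum_assoc_inner σ x v hv
        have hsw : ∀ j, s j = some (w j) := fun j => by rw [hs j, hrow j, hw j]
        rw [infSum_all_some S s w hsw]
        exact S.sum_assoc σ x w hw
      · have hxnone : S.sum x = none := by
          cases h : S.sum x
          · rfl
          · exact absurd ⟨_, h⟩ hSx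
        rw [hxnone]
        by_cases hsall : ∀ j, (s j).isSome
        · set w : ℕ → M := fun j => (s j).getD S.zero with hwdef
          have hsw : ∀ j, s j = some (w j) := fun j => by
            cases hsj : s j
            · exact absurd (hsj ▸ hsall j) (by simp)
            · simp [hwdef, hsj]
          have hw : ∀ j, S.sum (fun k => x (σ (j, k))) = some (w j) :=
            fun j => by rw [← hrow j, ← hs j, hsw j]
          rw [infSum_all_some S s w hsw]
          rw [← S.sum_assoc σ x w hw, hxnone]
        · push_neg at hsall
          obtain ⟨j0, hj0⟩ := hsall
          exact (infSum_none S s j0 (Option.not_isSome_iff_eq_none.mp hj0)).symm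
    · push_neg at hall
      obtain ⟨i0, hi0⟩ := hall
      have hzi0 : z i0 = none := Option.not_isSome_iff_eq_none.mp hi0
      obtain ⟨⟨j0, k0⟩, hjk⟩ := σ.surjective i0
      have hsj0 : s j0 = none := by
        rw [hs j0]
        exact infSum_none S _ k0 (by rw [hjk]; exact hzi0)
      rw [infSum_none S z i0 hzi0, infSum_none S s j0 hsj0]
  · -- sum_assoc_inner
    intro σ z v _ j
    exact ⟨_, rfl⟩
  refine ⟨rfl, ?_, ?_, ?_, ?_, ?_⟩
  · intro z x v hzx hv
    simp only
    rw [infSum_all_some S z x hzx, hv]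
  · intro z hno
    refine congrArg some ?_
    by_cases hall : ∀ i, (z i).isSome
    · set x : ℕ → M := fun i => (z i).getD S.zero with hx
      have hz' : ∀ i, z i = some (x i) := fun i => by
        cases hzi : z i
        · exact absurd (hzi ▸ hall i) (by simp)
        · simp [hx, hzi]
      rw [infSum_all_some S z x hz']
      cases h : S.sum x
      · rfl
      · exact absurd ⟨x, hz', _, h⟩ hno
    · push_neg at hall
      obtain ⟨i0, hi0⟩ := hall
      exact infSum_none S z i0 (Option.not_isSome_iff_eq_none.mp hi0)
  · intro z; exact ⟨_, rfl⟩
  · refine ⟨rfl, ?_⟩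
    intro x v hv
    simp only
    rw [infSum_all_some S _ x (fun i => rfl), hv]
  · exact fun a b h => Option.some_injective _ h
end

section
/- Let M and N be Σ-monoids and let H be the set of Σ-monoid homomorphisms M → N. For a family (f_i)_{i∈ℕ} in H, declare Σ_i f_i to be defined iff Σ_i f_i(x) is defined in N for every x ∈ M, in which case its value is the function x ↦ Σ_i f_i(x). Then: (a) whenever Σ_i f_i is defined, the function x ↦ Σ_i f_i(x) is again a Σ-monoid homomorphism M → N; (b) H, with the constant-zero function as zero and this partial sum, is a Σ-monoid. -/
namespace SigmaMonoid

variable {N : Type} (T : SigmaMonoid N)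

theorem sum_const_zero : T.sum (fun _ => T.zero) = some T.zero :=
  T.sum_unit _ 0 fun _ _ => rfl

theorem sum_rowSums_eq_sum_colSums (a : ℕ → ℕ → N) (r c : ℕ → N)
    (hr : ∀ j, T.sum (a j) = some (r j)) (hc : ∀ k, T.sum (fun j => a j k) = some (c k)) :
    T.sum r = T.sum c := by
  let e : ℕ × ℕ ≃ ℕ := Denumerable.eqv (ℕ × ℕ)
  let X : ℕ → N := fun m => a (e.symm m).1 (e.symm m).2
  calc T.sum r = T.sum X := (T.sum_assoc e X r fun j => by simpa [X] using hr j).symm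
    _ = T.sum c := T.sum_assoc ((Equiv.prodComm ℕ ℕ).trans e) X c fun k => by simpa [X] using hc k

end SigmaMonoid

namespace SigmaHom

variable {M N : Type} {S : SigmaMonoid M} {T : SigmaMonoid N}

theorem const_zero : SigmaHom S T fun _ => T.zero :=
  ⟨rfl, fun _ _ _ => T.sum_const_zero⟩

theorem of_sum_eq_some {f : ℕ → M → N} (hf : ∀ i, SigmaHom S T (f i)) {g : M → N}
    (hg : ∀ x, T.sum (fun i => f i x) = some (g x)) : SigmaHom S T g := by
  refine ⟨?_, fun x v hxv => ?_⟩
  · have hzero : T.sum (fun i => f i S.zero) = some T.zero := by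
      simpa only [(hf _).1] using T.sum_const_zero
    exact Option.some_injective _ ((hg S.zero).symm.trans hzero)
  · rw [← T.sum_rowSums_eq_sum_colSums (fun j k => f j (x k)) (fun j => f j v) (fun k => g (x k))
      (fun j => (hf j).2 x v hxv) (fun k => hg (x k)), hg v]

end SigmaHom

namespace SigmaMonoid

variable {M N : Type} (S : SigmaMonoid M) (T : SigmaMonoid N)

open Classical in
noncomputable def homSum (F : ℕ → {f : M → N // SigmaHom S T f}) :
    Option {f : M → N // SigmaHom S T f} :=
  if h : ∀ x, ∃ w, T.sum (fun i => (F i).1 x) = some w then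
    some ⟨fun x => (h x).choose,
      SigmaHom.of_sum_eq_some (fun i => (F i).2) fun x => (h x).choose_spec⟩
  else none

variable {S T}

theorem homSum_eq_some_iff {F : ℕ → {f : M → N // SigmaHom S T f}} {G : {f : M → N // SigmaHom S T f}} :
    homSum S T F = some G ↔ ∀ x, T.sum (fun i => (F i).1 x) = some (G.1 x) := by
  unfold homSum
  constructor
  · intro h x
    split_ifs at h with hdef
    obtain rfl := Option.some_injective _ h
    exact (hdef x).choose_spec
  · intro h
    have hdef : ∀ x, ∃ w, T.sum (fun i => (F i).1 x) = some w := fun x => ⟨_, h x⟩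
    rw [dif_pos hdef]
    exact congrArg some <| Subtype.ext <| funext fun x =>
      Option.some_injective _ ((hdef x).choose_spec.symm.trans (h x))

theorem homSum_isSome {F : ℕ → {f : M → N // SigmaHom S T f}}
    (h : ∀ x, ∃ w, T.sum (fun i => (F i).1 x) = some w) : ∃ G, homSum S T F = some G :=
  ⟨_, dif_pos h⟩

theorem homSum_congr {F G : ℕ → {f : M → N // SigmaHom S T f}}
    (h : ∀ x, T.sum (fun i => (F i).1 x) = T.sum (fun i => (G i).1 x)) :
    homSum S T F = homSum S T G := by
  by_cases hdef : ∀ x, ∃ w, T.sum (fun i => (F i).1 x) = some w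
  · obtain ⟨H, hH⟩ := homSum_isSome hdef
    rw [hH, eq_comm, homSum_eq_some_iff]
    exact fun x => (h x).symm.trans (homSum_eq_some_iff.1 hH x)
  · have hdef' : ¬∀ x, ∃ w, T.sum (fun i => (G i).1 x) = some w := by simpa only [h] using hdef
    simp only [homSum, dif_neg hdef, dif_neg hdef']

variable (S T)

noncomputable def homs : SigmaMonoid {f : M → N // SigmaHom S T f} where
  zero := ⟨fun _ => T.zero, SigmaHom.const_zero⟩
  sum := homSum S T
  sum_unit F j hF := homSum_eq_some_iff.2 fun x =>
    T.sum_unit _ j fun i hi => by rw [hF i hi]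
  sum_perm I J σ F G hF hG hσ := homSum_congr fun x =>
    T.sum_perm I J σ _ _ (fun i hi => by rw [hF i hi]) (fun j hj => by rw [hG j hj])
      (fun i => by rw [hσ i])
  sum_assoc σ F s hrows := homSum_congr fun x =>
    T.sum_assoc σ _ (fun j => (s j).1 x) fun j => homSum_eq_some_iff.1 (hrows j) x
  sum_assoc_inner σ F G hFG j := homSum_isSome fun x =>
    T.sum_assoc_inner σ (fun i => (F i).1 x) (G.1 x) (homSum_eq_some_iff.1 hFG x) j

end SigmaMonoid

/-- (a) A pointwise-defined countable sum of Σ-monoid homomorphisms is again a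
Σ-monoid homomorphism; (b) the set of Σ-monoid homomorphisms `M → N`, with the
constant-zero map as zero and the pointwise partial sum (defined iff all the
pointwise sums are defined in `N`), is a Σ-monoid. -/
theorem stmt10 {M N : Type} (S : SigmaMonoid M) (T : SigmaMonoid N) :
    (∀ f : ℕ → M → N, (∀ i, SigmaHom S T (f i)) →
      ∀ g : M → N, (∀ x, T.sum (fun i => f i x) = some (g x)) → SigmaHom S T g) ∧
    ∃ U : SigmaMonoid {f : M → N // SigmaHom S T f},
      (U.zero.1 = fun _ => T.zero) ∧
      ∀ (F : ℕ → {f : M → N // SigmaHom S T f}) (G : {f : M → N // SigmaHom S T f}),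
        U.sum F = some G ↔ ∀ x, T.sum (fun i => (F i).1 x) = some (G.1 x) :=
  ⟨fun _ hf _ hg => SigmaHom.of_sum_eq_some hf hg,
    SigmaMonoid.homs S T, rfl, fun _ _ => SigmaMonoid.homSum_eq_some_iff⟩
end

section
/- Let R be a Σ-semiring and M an R-module. Then there exist a complete R-module M̄ (an R-module in which all countable sums are defined) and an injective R-linear map ι : M → M̄ such that: (i) for every complete R-module N and every R-linear map g : M → N there is a unique R-linear map h : M̄ → N with g = h∘ι; (ii) ι is sum-reflecting: if (x_i) is a countable family in M and x ∈ M with Σ_i ι(x_i) = ι(x) in M̄, then Σ_i x_i is defined in M and equals x; (iii) the image of ι is downward closed: if y, z ∈ M̄ and x ∈ M satisfy y + z = ι(x), then y = ι(y') for some y' ∈ M. -/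
/-- A Σ-semiring: a Σ-monoid with a total commutative multiplication distributing
over the partial sums. -/
structure SigmaSemiring (R : Type) extends SigmaMonoid R where
  one : R
  mul : R → R → R
  mul_assoc' : ∀ a b c, mul (mul a b) c = mul a (mul b c)
  mul_comm' : ∀ a b, mul a b = mul b a
  one_mul' : ∀ a, mul one a = a
  zero_mul' : ∀ a, mul zero a = zero
  mul_sum : ∀ (e : ℕ ≃ ℕ × ℕ) (r s : ℕ → R) (a b : R),
      sum r = some a → sum s = some b →
      sum (fun n => mul (r (e n).1) (s (e n).2)) = some (mul a b)

/-- A module over a Σ-semiring. -/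
structure SigmaModule (R : Type) (S : SigmaSemiring R) (M : Type) extends SigmaMonoid M where
  smul : R → M → M
  one_smul' : ∀ x, smul S.one x = x
  mul_smul' : ∀ r s x, smul (S.mul r s) x = smul r (smul s x)
  zero_smul' : ∀ x, smul S.zero x = zero
  smul_zero' : ∀ r, smul r zero = zero
  smul_sum : ∀ (e : ℕ ≃ ℕ × ℕ) (r : ℕ → R) (x : ℕ → M) (a : R) (b : M),
      S.sum r = some a → sum x = some b →
      sum (fun n => smul (r (e n).1) (x (e n).2)) = some (smul a b)

/-- An `R`-linear map between `R`-modules. -/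
def RLinear {R M N : Type} (S : SigmaSemiring R)
    (MM : SigmaModule R S M) (NN : SigmaModule R S N) (f : M → N) : Prop :=
  f MM.zero = NN.zero ∧
  (∀ (x : ℕ → M) (v : M), MM.sum x = some v → NN.sum (fun i => f (x i)) = some (f v)) ∧
  (∀ r x, f (MM.smul r x) = NN.smul r (f x))

noncomputable section CompletionAux
open Classical

def pairN : ℕ × ℕ ≃ ℕ := Denumerable.eqv (ℕ × ℕ)

def mergeF {A : Type} (f : ℕ → ℕ → A) : ℕ → A :=
  fun n => f (pairN.symm n).1 (pairN.symm n).2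

lemma mergeF_pair {A : Type} (f : ℕ → ℕ → A) (j k : ℕ) :
    mergeF f (pairN (j, k)) = f j k := by
  simp [mergeF]

lemma mergeF_row {A : Type} (f : ℕ → ℕ → A) (j : ℕ) :
    (fun k => mergeF f (pairN (j, k))) = f j := by
  funext k; exact mergeF_pair f j k

namespace SigmaMonoid

variable {A : Type} (T : SigmaMonoid A)

/-- reindex along a bijection of ℕ -/
lemma sum_reindex (e : ℕ ≃ ℕ) (x y : ℕ → A) (h : ∀ n, x n = y (e n)) :
    T.sum x = T.sum y := by
  refine T.sum_perm ∅ ∅ (Equiv.subtypeEquiv e (by simp)) x y (by simp) (by simp) ?_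
  intro i
  exact h i.1

/-- a zero-padded family has the same sum as the core family -/
lemma sum_pad (x y : ℕ → A) (g : ℕ → ℕ) (hg : Function.Injective g)
    (hxy : ∀ j, x (g j) = y j) (h0 : ∀ n, n ∉ Set.range g → x n = T.zero) :
    T.sum x = T.sum y := by
  have hcompl : ((Set.range g)ᶜ : Set ℕ)ᶜ = Set.range g := compl_compl _
  refine T.sum_perm ((Set.range g)ᶜ) ∅
    ((Equiv.setCongr hcompl).trans ((Equiv.ofInjective g hg).symm.trans
      ((Equiv.Set.univ ℕ).symm.trans (Equiv.setCongr (by simp))))) x y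
    (fun i hi => h0 i hi) (by simp) ?_
  intro i
  simp only [Equiv.trans_apply]
  set q : ↥(Set.range g) := Equiv.setCongr hcompl i with hq
  have hval : (q : ℕ) = (i : ℕ) := rfl
  have h1 : g ((Equiv.ofInjective g hg).symm q) = (q : ℕ) :=
    Equiv.apply_ofInjective_symm hg q
  have h2 : ((Equiv.setCongr (by simp : (Set.univ : Set ℕ) = (∅ : Set ℕ)ᶜ))
      ((Equiv.Set.univ ℕ).symm ((Equiv.ofInjective g hg).symm q)) : ℕ)
      = (Equiv.ofInjective g hg).symm q := rfl
  rw [h2, ← hxy ((Equiv.ofInjective g hg).symm q), h1, hval]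

end SigmaMonoid
end CompletionAux
noncomputable section CompletionAux2
open Classical

/-- the family `(m, 0, 0, …)` -/
def deltaF {A : Type} (T : SigmaMonoid A) (m : A) : ℕ → A :=
  fun n => if n = 0 then m else T.zero

lemma sum_deltaF {A : Type} (T : SigmaMonoid A) (m : A) :
    T.sum (deltaF T m) = some m := by
  have := T.sum_unit (deltaF T m) 0 (fun i hi => by simp [deltaF, hi])
  simpa [deltaF] using this

variable {R : Type} (S : SigmaSemiring R)

lemma mul_sum_single (r : R) (s : ℕ → R) (b : R) (h : S.sum s = some b) :
    S.sum (fun n => S.mul r (s n)) = some (S.mul r b) := by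
  have hr : S.sum (deltaF S.toSigmaMonoid r) = some r := sum_deltaF _ r
  have key := S.mul_sum pairN.symm (deltaF S.toSigmaMonoid r) s r b hr h
  have hpad : S.sum (fun n => S.mul (deltaF S.toSigmaMonoid r (pairN.symm n).1) (s (pairN.symm n).2))
      = S.sum (fun j => S.mul r (s j)) := by
    apply S.sum_pad _ _ (fun j => pairN (0, j))
      (fun a b hab => by
        have := congrArg (fun n => (pairN.symm n).2) hab
        simpa using this)
    · intro j; simp [deltaF]
    · intro n hn
      have h1 : (pairN.symm n).1 ≠ 0 := by
        intro h0
        exact hn ⟨(pairN.symm n).2, by rw [← h0]; simp⟩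
      simp [deltaF, h1, S.zero_mul']
  rw [← hpad]; exact key

variable {M : Type} (MM : SigmaModule R S M)

lemma smul_sum_single (r : R) (x : ℕ → M) (v : M) (h : MM.sum x = some v) :
    MM.sum (fun n => MM.smul r (x n)) = some (MM.smul r v) := by
  have hr : S.sum (deltaF S.toSigmaMonoid r) = some r := sum_deltaF _ r
  have key := MM.smul_sum pairN.symm (deltaF S.toSigmaMonoid r) x r v hr h
  have hpad : MM.sum (fun n => MM.smul (deltaF S.toSigmaMonoid r (pairN.symm n).1) (x (pairN.symm n).2))
      = MM.sum (fun j => MM.smul r (x j)) := by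
    apply SigmaMonoid.sum_pad _ _ _ (fun j => pairN (0, j))
      (fun a b hab => by
        have := congrArg (fun n => (pairN.symm n).2) hab
        simpa using this)
    · intro j; simp [deltaF]
    · intro n hn
      have h1 : (pairN.symm n).1 ≠ 0 := by
        intro h0
        exact hn ⟨(pairN.symm n).2, by rw [← h0]; simp⟩
      simp [deltaF, h1, MM.zero_smul']
  rw [← hpad]; exact key

/-- summing a constant element against a summable scalar family -/
lemma sum_smul_const (ρ : ℕ → R) (a : R) (m : M) (h : S.sum ρ = some a) :
    MM.sum (fun k => MM.smul (ρ k) m) = some (MM.smul a m) := by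
  have hm : MM.sum (deltaF MM.toSigmaMonoid m) = some m := sum_deltaF _ m
  have key := MM.smul_sum pairN.symm ρ (deltaF MM.toSigmaMonoid m) a m h hm
  have hpad : MM.sum (fun n => MM.smul (ρ (pairN.symm n).1) (deltaF MM.toSigmaMonoid m (pairN.symm n).2))
      = MM.sum (fun k => MM.smul (ρ k) m) := by
    apply SigmaMonoid.sum_pad _ _ _ (fun k => pairN (k, 0))
      (fun a b hab => by
        have := congrArg (fun n => (pairN.symm n).1) hab
        simpa using this)
    · intro k; simp [deltaF]
    · intro n hn
      have h1 : (pairN.symm n).2 ≠ 0 := by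
        intro h0
        exact hn ⟨(pairN.symm n).1, by rw [← h0]; simp⟩
      simp [deltaF, h1, MM.smul_zero']
  rw [← hpad]; exact key

end CompletionAux2
section CompletionE
open Classical

/-- The congruence used to build the completion. -/
inductive Erel {R M : Type} (S : SigmaSemiring R) (MM : SigmaModule R S M) :
    (ℕ → M) → (ℕ → M) → Prop
  | perm : ∀ (x y : ℕ → M) (I J : Set ℕ) (σ : ↥(Iᶜ) ≃ ↥(Jᶜ)),
      (∀ i ∈ I, x i = MM.zero) → (∀ j ∈ J, y j = MM.zero) →
      (∀ i : ↥(Iᶜ), x i.1 = y (σ i).1) → Erel S MM x y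
  | blocks : ∀ (σ : ℕ × ℕ ≃ ℕ) (x y : ℕ → M),
      (∀ j, MM.sum (fun k => x (σ (j, k))) = some (y j)) → Erel S MM x y
  | symm : ∀ {x y}, Erel S MM x y → Erel S MM y x
  | trans : ∀ {x y z}, Erel S MM x y → Erel S MM y z → Erel S MM x z
  | merge : ∀ (f g : ℕ → ℕ → M), (∀ j, Erel S MM (f j) (g j)) →
      Erel S MM (mergeF f) (mergeF g)
  | smulc : ∀ (r : R) (x y : ℕ → M), Erel S MM x y →
      Erel S MM (fun n => MM.smul r (x n)) (fun n => MM.smul r (y n))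
  | smul_family : ∀ (e : ℕ ≃ ℕ × ℕ) (r : ℕ → R) (a : R) (y : ℕ → M),
      S.sum r = some a →
      Erel S MM (fun n => MM.smul (r (e n).1) (y (e n).2)) (fun n => MM.smul a (y n))

variable {R M : Type} (S : SigmaSemiring R) (MM : SigmaModule R S M)

lemma Erel_reindex (e : ℕ ≃ ℕ) (x y : ℕ → M) (h : ∀ n, x n = y (e n)) :
    Erel S MM x y :=
  Erel.perm x y ∅ ∅ (Equiv.subtypeEquiv e (by simp)) (by simp) (by simp)
    (fun i => h i.1)

lemma Erel_refl (x : ℕ → M) : Erel S MM x x :=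
  Erel_reindex S MM (Equiv.refl ℕ) x x (fun _ => rfl)

lemma Erel_of_eq {x y : ℕ → M} (h : x = y) : Erel S MM x y := h ▸ Erel_refl S MM x

lemma Erel_pad (x y : ℕ → M) (g : ℕ → ℕ) (hg : Function.Injective g)
    (hxy : ∀ j, x (g j) = y j) (h0 : ∀ n, n ∉ Set.range g → x n = MM.zero) :
    Erel S MM x y := by
  have hcompl : ((Set.range g)ᶜ : Set ℕ)ᶜ = Set.range g := compl_compl _
  refine Erel.perm x y ((Set.range g)ᶜ) ∅
    ((Equiv.setCongr hcompl).trans ((Equiv.ofInjective g hg).symm.trans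
      ((Equiv.Set.univ ℕ).symm.trans (Equiv.setCongr (by simp))))) 
    (fun i hi => h0 i hi) (by simp) ?_
  intro i
  simp only [Equiv.trans_apply]
  set q : ↥(Set.range g) := Equiv.setCongr hcompl i with hq
  have hval : (q : ℕ) = (i : ℕ) := rfl
  have h1 : g ((Equiv.ofInjective g hg).symm q) = (q : ℕ) :=
    Equiv.apply_ofInjective_symm hg q
  have h2 : ((Equiv.setCongr (by simp : (Set.univ : Set ℕ) = (∅ : Set ℕ)ᶜ))
      ((Equiv.Set.univ ℕ).symm ((Equiv.ofInjective g hg).symm q)) : ℕ)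
      = (Equiv.ofInjective g hg).symm q := rfl
  rw [h2, ← hxy ((Equiv.ofInjective g hg).symm q), h1, hval]

/-- Key invariant: related families have equal (partial) sums of all scalar multiples. -/
lemma Erel_sum_smul {x y : ℕ → M} (h : Erel S MM x y) :
    ∀ r : R, MM.sum (fun n => MM.smul r (x n)) = MM.sum (fun n => MM.smul r (y n)) := by
  induction h with
  | perm x y I J σ hx hy hval =>
      intro r
      refine MM.sum_perm I J σ _ _ (fun i hi => by rw [hx i hi, MM.smul_zero'])
        (fun j hj => by rw [hy j hj, MM.smul_zero']) (fun i => by rw [hval i])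
  | blocks σ x y hrow =>
      intro r
      refine MM.sum_assoc σ _ _ (fun j => ?_)
      exact smul_sum_single S MM r _ _ (hrow j)
  | symm h ih => intro r; exact (ih r).symm
  | trans h1 h2 ih1 ih2 => intro r; exact (ih1 r).trans (ih2 r)
  | merge f g hj ih =>
      intro r
      by_cases hall : ∀ j, ∃ s, MM.sum (fun k => MM.smul r (f j k)) = some s
      · choose s hs using hall
        have hrf : ∀ j, MM.sum (fun k => MM.smul r (mergeF f (pairN (j, k)))) = some (s j) := by
          intro j
          have : (fun k => MM.smul r (mergeF f (pairN (j, k)))) = fun k => MM.smul r (f j k) := by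
            funext k; rw [mergeF_pair]
          rw [this]; exact hs j
        have hrg : ∀ j, MM.sum (fun k => MM.smul r (mergeF g (pairN (j, k)))) = some (s j) := by
          intro j
          have : (fun k => MM.smul r (mergeF g (pairN (j, k)))) = fun k => MM.smul r (g j k) := by
            funext k; rw [mergeF_pair]
          rw [this, ← ih j r]; exact hs j
        rw [MM.sum_assoc pairN (fun n => MM.smul r (mergeF f n)) s hrf,
          MM.sum_assoc pairN (fun n => MM.smul r (mergeF g n)) s hrg]
      · push_neg at hall
        obtain ⟨j, hj'⟩ := hall
        have hfnone : MM.sum (fun k => MM.smul r (f j k)) = none := by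
          cases hfj : MM.sum (fun k => MM.smul r (f j k)) with
          | none => rfl
          | some s => exact absurd hfj (hj' s)
        have hgnone : MM.sum (fun k => MM.smul r (g j k)) = none := by
          rw [← ih j r]; exact hfnone
        have h1 : MM.sum (fun n => MM.smul r (mergeF f n)) = none := by
          cases hv : MM.sum (fun n => MM.smul r (mergeF f n)) with
          | none => rfl
          | some v =>
              obtain ⟨w, hw⟩ := MM.sum_assoc_inner pairN _ v hv j
              have : (fun k => MM.smul r (mergeF f (pairN (j, k)))) = fun k => MM.smul r (f j k) := by
                funext k; rw [mergeF_pair]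
              rw [this] at hw
              rw [hw] at hfnone; exact absurd hfnone (by simp)
        have h2 : MM.sum (fun n => MM.smul r (mergeF g n)) = none := by
          cases hv : MM.sum (fun n => MM.smul r (mergeF g n)) with
          | none => rfl
          | some v =>
              obtain ⟨w, hw⟩ := MM.sum_assoc_inner pairN _ v hv j
              have : (fun k => MM.smul r (mergeF g (pairN (j, k)))) = fun k => MM.smul r (g j k) := by
                funext k; rw [mergeF_pair]
              rw [this] at hw
              rw [hw] at hgnone; exact absurd hgnone (by simp)
        rw [h1, h2]
  | smulc r x y h ih =>
      intro r'
      have e1 : (fun n => MM.smul r' (MM.smul r (x n))) = fun n => MM.smul (S.mul r' r) (x n) := by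
        funext n; rw [MM.mul_smul']
      have e2 : (fun n => MM.smul r' (MM.smul r (y n))) = fun n => MM.smul (S.mul r' r) (y n) := by
        funext n; rw [MM.mul_smul']
      rw [e1, e2]; exact ih (S.mul r' r)
  | smul_family e r a y hr =>
      intro r'
      have hρ : S.sum (fun i => S.mul r' (r i)) = some (S.mul r' a) :=
        mul_sum_single S r' r a hr
      have e1 : (fun n => MM.smul r' (MM.smul (r (e n).1) (y (e n).2)))
          = fun n => MM.smul (S.mul r' (r (e n).1)) (y (e n).2) := by
        funext n; rw [MM.mul_smul']
      have e2 : (fun n => MM.smul r' (MM.smul a (y n))) = fun n => MM.smul (S.mul r' a) (y n) := by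
        funext n; rw [MM.mul_smul']
      rw [e1, e2]
      refine MM.sum_assoc ((Equiv.prodComm ℕ ℕ).trans e.symm) _ _ (fun j => ?_)
      have e3 : (fun k => MM.smul (S.mul r' (r (e (((Equiv.prodComm ℕ ℕ).trans e.symm) (j, k))).1))
          (y (e (((Equiv.prodComm ℕ ℕ).trans e.symm) (j, k))).2))
          = fun k => MM.smul (S.mul r' (r k)) (y j) := by
        funext k; simp
      rw [e3]
      exact sum_smul_const S MM _ _ _ hρ

lemma Erel_sum {x y : ℕ → M} (h : Erel S MM x y) : MM.sum x = MM.sum y := by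
  have := Erel_sum_smul S MM h S.one
  simpa [MM.one_smul'] using this

end CompletionE
section CompletionTransport
open Classical

variable {R M : Type} (S : SigmaSemiring R) (MM : SigmaModule R S M)
variable {N : Type} (NN : SigmaModule R S N)

lemma Erel_transport (hN : ∀ z : ℕ → N, ∃ w, NN.sum z = some w)
    (g : M → N) (hg : RLinear S MM NN g) {x y : ℕ → M} (h : Erel S MM x y) :
    NN.sum (fun n => g (x n)) = NN.sum (fun n => g (y n)) := by
  obtain ⟨hg0, hgsum, hgsmul⟩ := hg
  induction h with
  | perm x y I J σ hx hy hval =>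
      refine NN.sum_perm I J σ _ _ (fun i hi => by rw [hx i hi, hg0])
        (fun j hj => by rw [hy j hj, hg0]) (fun i => by rw [hval i])
  | blocks σ x y hrow =>
      refine NN.sum_assoc σ _ _ (fun j => ?_)
      exact hgsum _ _ (hrow j)
  | symm h ih => exact ih.symm
  | trans h1 h2 ih1 ih2 => exact ih1.trans ih2
  | merge f f' hj ih =>
      choose w hw using fun j => hN (fun k => g (f j k))
      have hw' : ∀ j, NN.sum (fun k => g (f' j k)) = some (w j) := by
        intro j; rw [← ih j]; exact hw j
      have h1 : NN.sum (fun n => g (mergeF f n)) = NN.sum w := by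
        refine NN.sum_assoc pairN _ _ (fun j => ?_)
        have : (fun k => g (mergeF f (pairN (j, k)))) = fun k => g (f j k) := by
          funext k; rw [mergeF_pair]
        rw [this]; exact hw j
      have h2 : NN.sum (fun n => g (mergeF f' n)) = NN.sum w := by
        refine NN.sum_assoc pairN _ _ (fun j => ?_)
        have : (fun k => g (mergeF f' (pairN (j, k)))) = fun k => g (f' j k) := by
          funext k; rw [mergeF_pair]
        rw [this]; exact hw' j
      rw [h1, h2]
  | smulc r x y h ih =>
      obtain ⟨v, hv⟩ := hN (fun n => g (x n))
      have hv' : NN.sum (fun n => g (y n)) = some v := by rw [← ih]; exact hv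
      have e1 : (fun n => g (MM.smul r (x n))) = fun n => NN.smul r (g (x n)) := by
        funext n; rw [hgsmul]
      have e2 : (fun n => g (MM.smul r (y n))) = fun n => NN.smul r (g (y n)) := by
        funext n; rw [hgsmul]
      rw [e1, e2, smul_sum_single S NN r _ v hv, smul_sum_single S NN r _ v hv']
  | smul_family e r a y hr =>
      obtain ⟨b, hb⟩ := hN (fun n => g (y n))
      have e1 : (fun n => g (MM.smul (r (e n).1) (y (e n).2)))
          = fun n => NN.smul (r (e n).1) (g (y (e n).2)) := by
        funext n; rw [hgsmul]
      have e2 : (fun n => g (MM.smul a (y n))) = fun n => NN.smul a (g (y n)) := by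
        funext n; rw [hgsmul]
      rw [e1, e2, smul_sum_single S NN a _ b hb]
      exact NN.smul_sum e r (fun n => g (y n)) a b hr hb

end CompletionTransport
section CompletionQuot
open Classical

variable {R M : Type} (S : SigmaSemiring R) (MM : SigmaModule R S M)

def ES : Setoid (ℕ → M) :=
  ⟨Erel S MM, ⟨Erel_refl S MM, Erel.symm, Erel.trans⟩⟩

def MbT := Quotient (ES S MM)

def mkQ (x : ℕ → M) : MbT S MM := Quotient.mk (ES S MM) x

noncomputable def outQ (c : MbT S MM) : ℕ → M := Quotient.out c

lemma mkQ_sound {x y : ℕ → M} (h : Erel S MM x y) : mkQ S MM x = mkQ S MM y :=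
  Quotient.sound h

lemma mkQ_exact {x y : ℕ → M} (h : mkQ S MM x = mkQ S MM y) : Erel S MM x y :=
  Quotient.exact h

lemma mkQ_out (c : MbT S MM) : mkQ S MM (outQ S MM c) = c := Quotient.out_eq c

lemma out_rel (c : MbT S MM) (x : ℕ → M) (h : c = mkQ S MM x) :
    Erel S MM (outQ S MM c) x :=
  mkQ_exact S MM ((mkQ_out S MM c).trans h)

/-- merged representative of a family of classes -/
noncomputable def mergeO (z : ℕ → MbT S MM) : ℕ → M := mergeF (fun j => outQ S MM (z j))

/-- `x` is related to `(v,0,0,…)` whenever `sum x = v`. -/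
lemma Erel_delta {x : ℕ → M} {v : M} (h : MM.sum x = some v) :
    Erel S MM x (deltaF MM.toSigmaMonoid v) := by
  set X : ℕ → M := mergeF (fun i => if i = 0 then x else fun _ => MM.zero) with hX
  have h1 : Erel S MM x X := by
    refine (Erel_pad S MM X x (fun k => pairN (0, k))
      (fun a b hab => by
        have := congrArg (fun n => (pairN.symm n).2) hab
        simpa using this) ?_ ?_).symm
    · intro k; rw [hX]; rw [mergeF_pair]; simp
    · intro n hn
      have h1 : (pairN.symm n).1 ≠ 0 := by
        intro h0
        exact hn ⟨(pairN.symm n).2, by rw [← h0]; simp⟩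
      rw [hX]; simp [mergeF, h1]
  refine h1.trans (Erel.blocks pairN X _ (fun j => ?_))
  by_cases hj : j = 0
  · subst hj
    have : (fun k => X (pairN (0, k))) = x := by
      funext k; rw [hX, mergeF_pair]; simp
    rw [this, h]; simp [deltaF]
  · have : (fun k => X (pairN (j, k))) = fun _ => MM.zero := by
      funext k; rw [hX, mergeF_pair]; simp [hj]
    rw [this]
    have := MM.sum_unit (fun _ => MM.zero) 0 (fun i _ => rfl)
    rw [this]; simp [deltaF, hj]

/-- merging the delta families of `x` gives back `x`. -/
lemma Erel_merge_delta (x : ℕ → M) :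
    Erel S MM (mergeF (fun i => deltaF MM.toSigmaMonoid (x i))) x := by
  refine Erel.blocks pairN _ _ (fun j => ?_)
  have : (fun k => mergeF (fun i => deltaF MM.toSigmaMonoid (x i)) (pairN (j, k)))
      = deltaF MM.toSigmaMonoid (x j) := by
    funext k; rw [mergeF_pair]
  rw [this]
  exact sum_deltaF _ _

end CompletionQuot
section CompletionMod
open Classical

variable {R M : Type} (S : SigmaSemiring R) (MM : SigmaModule R S M)

lemma NbT_sum_unit (z : ℕ → MbT S MM) (j : ℕ)
    (hz : ∀ i, i ≠ j → z i = mkQ S MM (fun _ => MM.zero)) :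
    mkQ S MM (mergeO S MM z) = z j := by
  set f : ℕ → ℕ → M := fun i => if i = j then outQ S MM (z j) else fun _ => MM.zero with hf
  have E1 : Erel S MM (mergeO S MM z) (mergeF f) := by
    refine Erel.merge _ _ (fun i => ?_)
    by_cases hi : i = j
    · subst hi; rw [hf]; simp only [if_pos rfl]; exact Erel_refl S MM _
    · rw [hf]; simp only [if_neg hi]
      exact out_rel S MM (z i) _ (hz i hi)
  have E2 : Erel S MM (mergeF f) (outQ S MM (z j)) := by
    refine Erel_pad S MM _ _ (fun k => pairN (j, k))
      (fun a b hab => by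
        have := congrArg (fun n => (pairN.symm n).2) hab
        simpa using this) ?_ ?_
    · intro k; rw [mergeF_pair, hf]; simp
    · intro n hn
      have h1 : (pairN.symm n).1 ≠ j := by
        intro h0
        exact hn ⟨(pairN.symm n).2, by rw [← h0]; simp⟩
      simp [mergeF, hf, h1]
  rw [mkQ_sound S MM (E1.trans E2), mkQ_out]

lemma NbT_sum_perm (I J : Set ℕ) (σ : ↥(Iᶜ) ≃ ↥(Jᶜ)) (z y : ℕ → MbT S MM)
    (hz : ∀ i ∈ I, z i = mkQ S MM (fun _ => MM.zero))
    (hy : ∀ j ∈ J, y j = mkQ S MM (fun _ => MM.zero))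
    (hval : ∀ i : ↥(Iᶜ), z i.1 = y (σ i).1) :
    mkQ S MM (mergeO S MM z) = mkQ S MM (mergeO S MM y) := by
  classical
  set f : ℕ → ℕ → M := fun i => if i ∈ I then (fun _ => MM.zero) else outQ S MM (z i) with hf
  set g : ℕ → ℕ → M := fun j =>
    if h : j ∈ J then (fun _ => MM.zero)
    else outQ S MM (z ((σ.symm ⟨j, h⟩ : ↥(Iᶜ)) : ℕ)) with hg
  have E1 : Erel S MM (mergeO S MM z) (mergeF f) := by
    refine Erel.merge _ _ (fun i => ?_)
    by_cases hi : i ∈ I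
    · rw [hf]; simp only [if_pos hi]; exact out_rel S MM (z i) _ (hz i hi)
    · rw [hf]; simp only [if_neg hi]; exact Erel_refl S MM _
  have E2 : Erel S MM (mergeO S MM y) (mergeF g) := by
    refine Erel.merge _ _ (fun j => ?_)
    by_cases hj : j ∈ J
    · rw [hg]; simp only [dif_pos hj]; exact out_rel S MM (y j) _ (hy j hj)
    · rw [hg]; simp only [dif_neg hj]
      have hjc : j ∈ Jᶜ := hj
      have hv := hval (σ.symm ⟨j, hjc⟩)
      have hσ : (σ (σ.symm ⟨j, hjc⟩) : ℕ) = j := by rw [Equiv.apply_symm_apply]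
      rw [hσ] at hv
      exact out_rel S MM (y j) _ (hv.symm.trans (mkQ_out S MM _).symm)
  -- the permutation between the two merged families
  have pmem : ∀ p : ↥(({n : ℕ | (pairN.symm n).1 ∈ I})ᶜ), ((pairN.symm p.1).1 ∈ Iᶜ) := by
    intro p; exact p.2
  have qmem : ∀ q : ↥(({n : ℕ | (pairN.symm n).1 ∈ J})ᶜ), ((pairN.symm q.1).1 ∈ Jᶜ) := by
    intro q; exact q.2
  set σ' : ↥(({n : ℕ | (pairN.symm n).1 ∈ I})ᶜ) ≃ ↥(({n : ℕ | (pairN.symm n).1 ∈ J})ᶜ) :=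
    { toFun := fun p => ⟨pairN ((σ ⟨(pairN.symm p.1).1, pmem p⟩ : ↥(Jᶜ)).1, (pairN.symm p.1).2),
        by
          have : ((σ ⟨(pairN.symm p.1).1, pmem p⟩ : ↥(Jᶜ)) : ℕ) ∈ Jᶜ :=
            (σ ⟨(pairN.symm p.1).1, pmem p⟩).2
          simp only [Set.mem_compl_iff, Set.mem_setOf_eq, Equiv.symm_apply_apply]
          exact this⟩,
      invFun := fun q => ⟨pairN ((σ.symm ⟨(pairN.symm q.1).1, qmem q⟩ : ↥(Iᶜ)).1, (pairN.symm q.1).2),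
        by
          have : ((σ.symm ⟨(pairN.symm q.1).1, qmem q⟩ : ↥(Iᶜ)) : ℕ) ∈ Iᶜ :=
            (σ.symm ⟨(pairN.symm q.1).1, qmem q⟩).2
          simp only [Set.mem_compl_iff, Set.mem_setOf_eq, Equiv.symm_apply_apply]
          exact this⟩,
      left_inv := by
        intro p
        apply Subtype.ext
        simp only [Equiv.symm_apply_apply]
        have h1 : (⟨((σ ⟨(pairN.symm p.1).1, pmem p⟩ : ↥(Jᶜ)) : ℕ), _⟩ : ↥(Jᶜ))
            = σ ⟨(pairN.symm p.1).1, pmem p⟩ := Subtype.ext rfl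
        rw [h1, Equiv.symm_apply_apply]
        simp
      right_inv := by
        intro q
        apply Subtype.ext
        simp only [Equiv.symm_apply_apply]
        have h1 : (⟨((σ.symm ⟨(pairN.symm q.1).1, qmem q⟩ : ↥(Iᶜ)) : ℕ), _⟩ : ↥(Iᶜ))
            = σ.symm ⟨(pairN.symm q.1).1, qmem q⟩ := Subtype.ext rfl
        rw [h1, Equiv.apply_symm_apply]
        simp } with hσ'
  have E3 : Erel S MM (mergeF f) (mergeF g) := by
    refine Erel.perm _ _ _ _ σ' ?_ ?_ ?_
    · intro n hn
      have : (pairN.symm n).1 ∈ I := hn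
      simp [mergeF, hf, this]
    · intro n hn
      have hn' : (pairN.symm n).1 ∈ J := hn
      simp [mergeF, hg, hn']
    · intro p
      have hmem : (pairN.symm p.1).1 ∈ Iᶜ := pmem p
      have hnI : (pairN.symm p.1).1 ∉ I := hmem
      have hL : mergeF f p.1 = outQ S MM (z (pairN.symm p.1).1) (pairN.symm p.1).2 := by
        simp [mergeF, hf, hnI]
      set t : ↥(Jᶜ) := σ ⟨(pairN.symm p.1).1, pmem p⟩ with ht
      have hnJ : (t : ℕ) ∉ J := t.2
      have hR : mergeF g ((σ' p) : ℕ)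
          = outQ S MM (z ((σ.symm ⟨(t : ℕ), t.2⟩ : ↥(Iᶜ)) : ℕ)) (pairN.symm p.1).2 := by
        show mergeF g (pairN ((t : ℕ), (pairN.symm p.1).2)) = _
        rw [mergeF_pair, hg]
        simp only [dif_neg hnJ]
      have h2 : (⟨(t : ℕ), t.2⟩ : ↥(Jᶜ)) = t := Subtype.ext rfl
      rw [hL, hR, h2, ht, Equiv.symm_apply_apply]
  rw [mkQ_sound S MM (E1.trans (E3.trans E2.symm))]

lemma NbT_sum_assoc (σa : ℕ × ℕ ≃ ℕ) (z s : ℕ → MbT S MM)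
    (hrow : ∀ j, mkQ S MM (mergeO S MM (fun k => z (σa (j, k)))) = s j) :
    mkQ S MM (mergeO S MM z) = mkQ S MM (mergeO S MM s) := by
  set B : ℕ → ℕ → M := fun j => mergeO S MM (fun k => z (σa (j, k))) with hB
  have E1 : Erel S MM (mergeO S MM s) (mergeF B) := by
    refine Erel.merge _ _ (fun j => ?_)
    exact out_rel S MM (s j) _ (hrow j).symm
  have E2 : Erel S MM (mergeO S MM z) (mergeF B) := by
    refine Erel_reindex S MM
      (pairN.symm.trans ((σa.symm.prodCongr (Equiv.refl ℕ)).trans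
        ((Equiv.prodAssoc ℕ ℕ ℕ).trans (((Equiv.refl ℕ).prodCongr pairN).trans pairN)))) _ _
      (fun n => ?_)
    simp only [Equiv.trans_apply, Equiv.prodCongr_apply, Equiv.coe_refl, Prod.map_apply,
      Equiv.prodAssoc_apply, id_eq]
    rw [mergeF_pair, hB]
    simp [mergeO, mergeF, Prod.mk.eta]
  rw [mkQ_sound S MM (E2.trans E1.symm)]

end CompletionMod
section CompletionSmul
open Classical

variable {R M : Type} (S : SigmaSemiring R) (MM : SigmaModule R S M)

noncomputable def smulQ (r : R) (c : MbT S MM) : MbT S MM :=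
  mkQ S MM (fun n => MM.smul r (outQ S MM c n))

lemma NbT_one_smul (c : MbT S MM) : smulQ S MM S.one c = c := by
  unfold smulQ
  have : (fun n => MM.smul S.one (outQ S MM c n)) = outQ S MM c := by
    funext n; rw [MM.one_smul']
  rw [this, mkQ_out]

lemma NbT_mul_smul (r s : R) (c : MbT S MM) :
    smulQ S MM (S.mul r s) c = smulQ S MM r (smulQ S MM s c) := by
  unfold smulQ
  apply mkQ_sound
  have h1 : Erel S MM (outQ S MM (mkQ S MM (fun n => MM.smul s (outQ S MM c n))))
      (fun n => MM.smul s (outQ S MM c n)) := out_rel S MM _ _ rfl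
  have h2 := Erel.smulc r _ _ h1
  have h3 : (fun n => MM.smul r (MM.smul s (outQ S MM c n)))
      = fun n => MM.smul (S.mul r s) (outQ S MM c n) := by
    funext n; rw [MM.mul_smul']
  rw [h3] at h2
  exact h2.symm

lemma NbT_zero_smul (c : MbT S MM) :
    smulQ S MM S.zero c = mkQ S MM (fun _ => MM.zero) := by
  unfold smulQ
  have : (fun n => MM.smul S.zero (outQ S MM c n)) = fun _ => MM.zero := by
    funext n; rw [MM.zero_smul']
  rw [this]

lemma NbT_smul_zero (r : R) :
    smulQ S MM r (mkQ S MM (fun _ => MM.zero)) = mkQ S MM (fun _ => MM.zero) := by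
  unfold smulQ
  apply mkQ_sound
  have h1 : Erel S MM (outQ S MM (mkQ S MM (fun _ => MM.zero))) (fun _ => MM.zero) :=
    out_rel S MM _ _ rfl
  have h2 := Erel.smulc r _ _ h1
  have h3 : (fun n : ℕ => MM.smul r ((fun _ : ℕ => MM.zero) n)) = fun _ : ℕ => MM.zero := by
    funext n; rw [MM.smul_zero']
  rw [h3] at h2
  exact h2

lemma NbT_smul_sum (e : ℕ ≃ ℕ × ℕ) (r : ℕ → R) (z : ℕ → MbT S MM) (a : R) (b : MbT S MM)
    (hr : S.sum r = some a) (hb : mkQ S MM (mergeO S MM z) = b) :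
    mkQ S MM (mergeO S MM (fun n => smulQ S MM (r (e n).1) (z (e n).2)))
      = smulQ S MM a b := by
  set Y : ℕ → M := mergeO S MM z with hY
  set e' : ℕ ≃ ℕ × ℕ :=
    pairN.symm.trans ((e.prodCongr (Equiv.refl ℕ)).trans
      ((Equiv.prodAssoc ℕ ℕ ℕ).trans ((Equiv.refl ℕ).prodCongr pairN))) with he'
  have E1 : Erel S MM (mergeO S MM (fun n => smulQ S MM (r (e n).1) (z (e n).2)))
      (mergeF (fun n => fun t => MM.smul (r (e n).1) (outQ S MM (z (e n).2) t))) := by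
    refine Erel.merge _ _ (fun n => ?_)
    exact out_rel S MM _ _ rfl
  have E2 : (mergeF (fun n => fun t => MM.smul (r (e n).1) (outQ S MM (z (e n).2) t)))
      = fun p => MM.smul (r (e' p).1) (Y (e' p).2) := by
    funext p
    simp only [he', Equiv.trans_apply, Equiv.prodCongr_apply, Equiv.coe_refl, Prod.map_apply,
      Equiv.prodAssoc_apply, id_eq]
    rw [hY]
    show MM.smul (r (e (pairN.symm p).1).1) (outQ S MM (z (e (pairN.symm p).1).2) (pairN.symm p).2)
      = _
    rw [mergeO]
    rw [mergeF_pair]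
    simp [Prod.map]
  have E3 : Erel S MM (fun p => MM.smul (r (e' p).1) (Y (e' p).2))
      (fun p => MM.smul a (Y p)) := Erel.smul_family e' r a Y hr
  have E4 : Erel S MM (fun p => MM.smul a (Y p)) (fun t => MM.smul a (outQ S MM b t)) := by
    refine Erel.smulc a _ _ ?_
    exact (out_rel S MM b Y hb.symm).symm
  exact mkQ_sound S MM (((E1.trans (Erel_of_eq S MM E2)).trans E3).trans E4)

/-- The completion as a SigmaModule. -/
noncomputable def NbT : SigmaModule R S (MbT S MM) where
  zero := mkQ S MM (fun _ => MM.zero)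
  sum := fun z => some (mkQ S MM (mergeO S MM z))
  sum_unit := fun z j hz => congrArg some (NbT_sum_unit S MM z j hz)
  sum_perm := fun I J σ z y hz hy hval => congrArg some (NbT_sum_perm S MM I J σ z y hz hy hval)
  sum_assoc := fun σa z s hrow => congrArg some (NbT_sum_assoc S MM σa z s (fun j => Option.some.inj (hrow j)))
  sum_assoc_inner := fun σa z v _ j => ⟨mkQ S MM (mergeO S MM (fun k => z (σa (j, k)))), rfl⟩
  smul := smulQ S MM
  one_smul' := NbT_one_smul S MM
  mul_smul' := NbT_mul_smul S MM
  zero_smul' := NbT_zero_smul S MM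
  smul_zero' := NbT_smul_zero S MM
  smul_sum := fun e r z a b hr hb => congrArg some (NbT_smul_sum S MM e r z a b hr (Option.some.inj hb))

end CompletionSmul
section CompletionIota
open Classical

variable {R M : Type} (S : SigmaSemiring R) (MM : SigmaModule R S M)

noncomputable def iotaQ (m : M) : MbT S MM := mkQ S MM (deltaF MM.toSigmaMonoid m)

lemma sum_iotaQ (x : ℕ → M) :
    (NbT S MM).sum (fun i => iotaQ S MM (x i)) = some (mkQ S MM x) := by
  show some (mkQ S MM (mergeO S MM (fun i => iotaQ S MM (x i)))) = some (mkQ S MM x)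
  congr 1
  apply mkQ_sound
  have E1 : Erel S MM (mergeO S MM (fun i => iotaQ S MM (x i)))
      (mergeF (fun i => deltaF MM.toSigmaMonoid (x i))) := by
    refine Erel.merge _ _ (fun i => ?_)
    exact out_rel S MM _ _ rfl
  exact E1.trans (Erel_merge_delta S MM x)

lemma iotaQ_linear : RLinear S MM (NbT S MM) (iotaQ S MM) := by
  refine ⟨?_, ?_, ?_⟩
  · show mkQ S MM (deltaF MM.toSigmaMonoid MM.zero) = mkQ S MM (fun _ => MM.zero)
    congr 1
    funext n
    simp [deltaF]
  · intro x v h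
    rw [sum_iotaQ]
    congr 1
    exact mkQ_sound S MM (Erel_delta S MM h)
  · intro r m
    show mkQ S MM (deltaF MM.toSigmaMonoid (MM.smul r m)) = smulQ S MM r (iotaQ S MM m)
    unfold smulQ
    apply mkQ_sound
    have h1 : Erel S MM (outQ S MM (iotaQ S MM m)) (deltaF MM.toSigmaMonoid m) :=
      out_rel S MM _ _ rfl
    have h2 := Erel.smulc r _ _ h1
    have h3 : (fun n => MM.smul r (deltaF MM.toSigmaMonoid m n))
        = deltaF MM.toSigmaMonoid (MM.smul r m) := by
      funext n
      by_cases hn : n = 0 <;> simp [deltaF, hn, MM.smul_zero']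
    rw [h3] at h2
    exact h2.symm

lemma iotaQ_injective : Function.Injective (iotaQ S MM) := by
  intro v w h
  have h1 := Erel_sum S MM (mkQ_exact S MM h)
  rw [sum_deltaF, sum_deltaF] at h1
  exact Option.some.inj h1

lemma iotaQ_reflect (x : ℕ → M) (v : M)
    (h : (NbT S MM).sum (fun i => iotaQ S MM (x i)) = some (iotaQ S MM v)) :
    MM.sum x = some v := by
  rw [sum_iotaQ] at h
  have h1 := Erel_sum S MM (mkQ_exact S MM (Option.some.inj h))
  rw [sum_deltaF] at h1
  exact h1

end CompletionIota
/-- Completion of an `R`-module: every `R`-module `M` admits a complete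
`R`-module `M̄` and an injective `R`-linear map `ι : M → M̄` which (i) is
universal among `R`-linear maps into complete `R`-modules, (ii) is
sum-reflecting, and (iii) has downward-closed image. -/
theorem stmt13 {R M : Type} (S : SigmaSemiring R) (MM : SigmaModule R S M) :
    ∃ (Mb : Type) (Nb : SigmaModule R S Mb) (ι : M → Mb),
      (∀ z : ℕ → Mb, ∃ w, Nb.sum z = some w) ∧
      Function.Injective ι ∧
      RLinear S MM Nb ι ∧
      (∀ (N : Type) (NN : SigmaModule R S N),
        (∀ z : ℕ → N, ∃ w, NN.sum z = some w) →
        ∀ g : M → N, RLinear S MM NN g →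
          ∃! h : Mb → N, RLinear S Nb NN h ∧ (fun x => h (ι x)) = g) ∧
      (∀ (x : ℕ → M) (v : M),
        Nb.sum (fun i => ι (x i)) = some (ι v) → MM.sum x = some v) ∧
      (∀ (y z : Mb) (x : M),
        SigmaMonoid.add Nb.toSigmaMonoid y z = some (ι x) → ∃ y' : M, y = ι y') := by
  classical
  refine ⟨MbT S MM, NbT S MM, iotaQ S MM, ?_, iotaQ_injective S MM, iotaQ_linear S MM,
    ?_, iotaQ_reflect S MM, ?_⟩
  · intro z
    exact ⟨mkQ S MM (mergeO S MM z), rfl⟩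
  · -- universal property
    intro N NN hNc g hg
    set h : MbT S MM → N := fun c => Classical.choose (hNc (fun i => g (outQ S MM c i))) with hh
    have hspec : ∀ c, NN.sum (fun i => g (outQ S MM c i)) = some (h c) :=
      fun c => Classical.choose_spec (hNc (fun i => g (outQ S MM c i)))
    have htrans : ∀ (c : MbT S MM) (x : ℕ → M), Erel S MM (outQ S MM c) x →
        NN.sum (fun i => g (x i)) = some (h c) := by
      intro c x hE
      rw [← Erel_transport S MM NN hNc g hg hE]
      exact hspec c
    have hcomp : ∀ m, h (iotaQ S MM m) = g m := by
      intro m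
      have h1 := htrans (iotaQ S MM m) (deltaF MM.toSigmaMonoid m) (out_rel S MM _ _ rfl)
      have h2 : NN.sum (fun i => g (deltaF MM.toSigmaMonoid m i)) = some (g m) := by
        have : (fun i => g (deltaF MM.toSigmaMonoid m i)) = deltaF NN.toSigmaMonoid (g m) := by
          funext i
          by_cases hi : i = 0 <;> simp [deltaF, hi, hg.1]
        rw [this]
        exact sum_deltaF _ _
      rw [h1] at h2
      exact Option.some.inj h2
    refine ⟨h, ⟨⟨?_, ?_, ?_⟩, funext hcomp⟩, ?_⟩
    · -- h zero
      have h1 := htrans ((NbT S MM).zero) (fun _ => MM.zero) (out_rel S MM _ _ rfl)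
      have h2 : NN.sum (fun i => g ((fun _ : ℕ => MM.zero) i)) = some NN.zero := by
        have : (fun i : ℕ => g MM.zero) = fun _ : ℕ => NN.zero := by
          funext i; rw [hg.1]
        rw [this]
        exact NN.sum_unit _ 0 (fun _ _ => rfl)
      rw [h1] at h2
      exact Option.some.inj h2
    · -- h preserves sums
      intro z v hv
      have hv' : v = mkQ S MM (mergeO S MM z) := (Option.some.inj hv).symm
      have h1 := htrans v (mergeO S MM z) (out_rel S MM _ _ hv')
      have h2 : NN.sum (fun i => g (mergeO S MM z i)) = NN.sum (fun j => h (z j)) := by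
        refine NN.sum_assoc pairN _ _ (fun j => ?_)
        have : (fun k => g (mergeO S MM z (pairN (j, k)))) = fun k => g (outQ S MM (z j) k) := by
          funext k
          rw [mergeO, mergeF_pair]
        rw [this]
        exact hspec (z j)
      rw [h2] at h1
      exact h1
    · -- h preserves scalars
      intro r c
      have h1 := htrans ((NbT S MM).smul r c) (fun n => MM.smul r (outQ S MM c n))
        (out_rel S MM _ _ rfl)
      have h2 : (fun i => g (MM.smul r (outQ S MM c i)))
          = fun i => NN.smul r (g (outQ S MM c i)) := by
        funext i; rw [hg.2.2]
      rw [h2] at h1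
      have h3 := smul_sum_single S NN r _ _ (hspec c)
      rw [h1] at h3
      exact Option.some.inj h3
    · -- uniqueness
      intro h' ⟨hlin, hcomp'⟩
      funext c
      have h1 : (NbT S MM).sum (fun i => iotaQ S MM (outQ S MM c i)) = some c := by
        rw [sum_iotaQ, mkQ_out]
      have h2 := hlin.2.1 _ _ h1
      have h3 : (fun i => h' (iotaQ S MM (outQ S MM c i))) = fun i => g (outQ S MM c i) := by
        funext i
        exact congrFun hcomp' (outQ S MM c i)
      rw [h3] at h2
      rw [hspec c] at h2
      exact (Option.some.inj h2).symm
  · -- downward closure of the image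
    intro y z x hadd
    have hadd' : mkQ S MM (mergeO S MM
        (fun n => if n = 0 then y else if n = 1 then z else (NbT S MM).zero))
        = iotaQ S MM x := Option.some.inj hadd
    have h1 := Erel_sum S MM (mkQ_exact S MM hadd')
    rw [sum_deltaF] at h1
    obtain ⟨v0, hv0⟩ := MM.sum_assoc_inner pairN _ x h1 0
    have hrow : (fun k => mergeO S MM
        (fun n => if n = 0 then y else if n = 1 then z else (NbT S MM).zero) (pairN (0, k)))
        = outQ S MM y := by
      funext k
      rw [mergeO, mergeF_pair]
      simp
    rw [hrow] at hv0
    refine ⟨v0, ?_⟩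
    rw [← mkQ_out S MM y]
    exact mkQ_sound S MM (Erel_delta S MM hv0)
end

section
/- Let M be a [0,1]-module with a countable dual basis (e_i, φ_i)_{i∈I} such that e_i ≠ 0 and φ_i ≠ 0 for every i ∈ I. If a, b, c ∈ M are such that the binary sums a + b and a + c are defined and a + b = a + c, then b = c. -/
/-- The unit interval `[0,1]`, as a subtype of the nonnegative reals. -/
def UnitI : Type := {r : NNReal // r ≤ 1}

def uZero : UnitI := ⟨0, zero_le_one⟩

def uOne : UnitI := ⟨1, le_refl 1⟩

def uMul (a b : UnitI) : UnitI :=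
  ⟨a.1 * b.1, by
    calc a.1 * b.1 ≤ 1 * 1 := mul_le_mul' a.2 b.2
    _ = 1 := one_mul 1⟩

open Classical in
/-- The partial sum on `[0,1]`: `Σ_i r_i` is defined iff the series converges
to a value `≤ 1`, in which case that value is the sum. -/
noncomputable def uSum (r : ℕ → UnitI) : Option UnitI :=
  if h : (∑' i, ((r i).1 : ENNReal)) ≤ 1 then
    some ⟨(∑' i, ((r i).1 : ENNReal)).toNNReal, by
      have hne : (∑' i, ((r i).1 : ENNReal)) ≠ ⊤ :=
        ne_top_of_le_ne_top ENNReal.one_ne_top h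
      exact ENNReal.coe_le_coe.mp
        (by rw [ENNReal.coe_toNNReal hne]; exact_mod_cast h)⟩
  else none

open Classical in
/-- `sumIdx S f v` says that the sum of the countable family `f`, taken along
an enumeration of its index set padded with zeros (which is independent of the
enumeration by the permutation axiom), is defined and equals `v`. -/
def sumIdx {M : Type} (S : SigmaMonoid M) {ι : Type} (f : ι → M) (v : M) : Prop :=
  ∃ e : ι ↪ ℕ,
    S.sum (fun n => if h : ∃ i, e i = n then f h.choose else S.zero) = some v

/-- A `[0,1]`-linear map from a `[0,1]`-module to `[0,1]` itself. -/
def UnitLinearMap (U : SigmaSemiring UnitI) {M : Type}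
    (MM : SigmaModule UnitI U M) (φ : M → UnitI) : Prop :=
  φ MM.zero = U.zero ∧
  (∀ (x : ℕ → M) (v : M), MM.sum x = some v →
    U.sum (fun i => φ (x i)) = some (φ v)) ∧
  (∀ (r : UnitI) (x : M), φ (MM.smul r x) = U.mul r (φ x))

/-- A countable dual basis `(e_i, φ_i)_{i ∈ ι}` of a `[0,1]`-module:
each `φ_i` is `[0,1]`-linear and `x = Σ_{i∈ι} φ_i(x)·e_i` for every `x`. -/
def IsDualBasis (U : SigmaSemiring UnitI) {M ι : Type}
    (MM : SigmaModule UnitI U M) (e : ι → M) (φ : ι → M → UnitI) : Prop :=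
  (∀ i, UnitLinearMap U MM (φ i)) ∧
  ∀ x : M, sumIdx MM.toSigmaMonoid (fun i => MM.smul (φ i x) (e i)) x


open Classical in
lemma pad_apply' {M ι : Type} (e : ι ↪ ℕ) (f : ι → M) (z : M) (j : ι) :
    (if h : ∃ i, e i = e j then f h.choose else z) = f j := by
  rw [dif_pos ⟨j, rfl⟩]
  congr 1
  exact e.injective (⟨j, rfl⟩ : ∃ i, (e i = e j)).choose_spec

/-- Determinism of `sumIdx`: two enumerations give the same sum. -/
lemma sumIdx_det {M ι : Type} (S : SigmaMonoid M) (f : ι → M) {b c : M}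
    (hb : sumIdx S f b) (hc : sumIdx S f c) : b = c := by
  classical
  obtain ⟨e1, h1⟩ := hb
  obtain ⟨e2, h2⟩ := hc
  have key := S.sum_perm ((Set.range e1)ᶜ) ((Set.range e2)ᶜ)
    (((Equiv.setCongr (compl_compl (Set.range e1))).trans
      ((Equiv.ofInjective e1 e1.injective).symm.trans
        (Equiv.ofInjective e2 e2.injective))).trans
      (Equiv.setCongr (compl_compl (Set.range e2)).symm))
    (fun n => if h : ∃ i, e1 i = n then f h.choose else S.zero)
    (fun n => if h : ∃ i, e2 i = n then f h.choose else S.zero)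
    ?_ ?_ ?_
  · rw [h1, h2] at key
    exact Option.some.inj key
  · intro n hn
    exact dif_neg (by rintro ⟨i, rfl⟩; exact hn ⟨i, rfl⟩)
  · intro n hn
    exact dif_neg (by rintro ⟨i, rfl⟩; exact hn ⟨i, rfl⟩)
  · rintro ⟨n, hn⟩
    rw [compl_compl] at hn
    obtain ⟨j, rfl⟩ := hn
    simp only [Equiv.trans_apply, Equiv.setCongr_apply]
    have hval : ((Equiv.ofInjective e1 e1.injective).symm ⟨e1 j, ⟨j, rfl⟩⟩) = j := by
      apply e1.injective
      rw [Equiv.apply_ofInjective_symm e1.injective]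
    simp only [hval, Equiv.ofInjective_apply]
    rw [pad_apply', pad_apply']

lemma uSum_pair {r s t : UnitI}
    (h : uSum (fun n => if n = 0 then r else if n = 1 then s else uZero) = some t) :
    (r.1 : ENNReal) + (s.1 : ENNReal) = (t.1 : ENNReal) := by
  classical
  unfold uSum at h
  split_ifs at h with hle
  · have ht := Option.some.inj h
    have hts : ∑' n : ℕ, (((if n = 0 then r else if n = 1 then s else uZero).1 : ENNReal))
        = (r.1 : ENNReal) + s.1 := by
      rw [tsum_eq_sum (s := ({0,1} : Finset ℕ))]
      · simp [Finset.sum_pair, uZero]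
      · intro n hn
        simp only [Finset.mem_insert, Finset.mem_singleton, not_or] at hn
        simp [hn.1, hn.2, uZero]
    have hne : (∑' n : ℕ, (((if n = 0 then r else if n = 1 then s else uZero).1 : ENNReal)))
        ≠ ⊤ := by
      refine ne_top_of_le_ne_top ENNReal.one_ne_top ?_
      exact hle
    have ht' := congrArg Subtype.val ht
    have ht1 : (t.1 : ENNReal)
        = ∑' n : ℕ, (((if n = 0 then r else if n = 1 then s else uZero).1 : ENNReal)) := by
      rw [← ht']
      exact ENNReal.coe_toNNReal hne
    rw [hts] at ht1
    exact ht1.symm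

/-- In a `[0,1]`-module with a countable dual basis (with nonzero basis vectors
and nonzero coordinate functionals), binary sums are cancellable:
`a + b = a + c` implies `b = c`. -/
theorem stmt14 (U : SigmaSemiring UnitI)
    (hUzero : U.zero = uZero) (hUone : U.one = uOne)
    (hUsum : U.sum = uSum) (hUmul : U.mul = uMul)
    {M ι : Type} [Countable ι]
    (MM : SigmaModule UnitI U M)
    (e : ι → M) (φ : ι → M → UnitI)
    (hbasis : IsDualBasis U MM e φ)
    (he0 : ∀ i, e i ≠ MM.zero)
    (hφ0 : ∀ i, φ i ≠ fun _ => U.zero)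
    (a b c : M) (v w : M)
    (hab : SigmaMonoid.add MM.toSigmaMonoid a b = some v)
    (hac : SigmaMonoid.add MM.toSigmaMonoid a c = some w)
    (hvw : v = w) :
    b = c := by
  classical
  subst hvw
  have hkey : ∀ i, φ i b = φ i c := by
    intro i
    obtain ⟨hz, hsum, hsm⟩ := hbasis.1 i
    have hb' := hsum _ v hab
    have hc' := hsum _ v hac
    unfold SigmaMonoid.add at hb' hc'
    have hfb : (fun n => φ i (if n = 0 then a else if n = 1 then b else MM.zero))
        = fun n => if n = 0 then φ i a else if n = 1 then φ i b else uZero := by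
      funext n
      split_ifs <;> simp_all [hUzero]
    have hfc : (fun n => φ i (if n = 0 then a else if n = 1 then c else MM.zero))
        = fun n => if n = 0 then φ i a else if n = 1 then φ i c else uZero := by
      funext n
      split_ifs <;> simp_all [hUzero]
    rw [hUsum] at hb' hc'
    rw [hfb] at hb'
    rw [hfc] at hc'
    have h1 := uSum_pair hb'
    have h2 := uSum_pair hc'
    have : ((φ i b).1 : ENNReal) = (φ i c).1 := by
      have := h1.trans h2.symm
      exact (ENNReal.add_right_inj ENNReal.coe_ne_top).mp this
    exact Subtype.ext (by exact_mod_cast this)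
  have hb := hbasis.2 b
  have hc := hbasis.2 c
  have hfun : (fun i => MM.smul (φ i b) (e i)) = fun i => MM.smul (φ i c) (e i) := by
    funext i; rw [hkey i]
  rw [hfun] at hb
  exact sumIdx_det MM.toSigmaMonoid _ hb hc
end

section
/- Let M be a [0,1]-module with a countable dual basis (e_i, φ_i)_{i∈I} such that e_i ≠ 0 and φ_i ≠ 0 for every i ∈ I. Call a subset J ⊆ I closed if j ∈ J and φ_i(e_j) ≠ 0 imply i ∈ J. If J ⊆ I is closed, then I ∖ J is closed. -/
open scoped ENNReal

section IdempotentMatrix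

variable {ι : Type} {a : ι → ι → ℝ≥0∞} {x : ι → ℝ≥0∞}

/-- Induction on `n`: in `x k = ∑' p, a k p * x p` the term `p = j` is at least
`a k i * a i j * x j`, and since `a j i = 0` the remaining terms are at least
`n * ∑' p, a k p * a p i * (a i j * x j) = n * a k i * (a i j * x j)`. -/
theorem nat_mul_le_of_idempotent_of_apply_eq_zero
    (ha : ∀ k l, ∑' p, a k p * a p l = a k l) (hx : ∀ k, ∑' p, a k p * x p = x k)
    {i j : ι} (hji : a j i = 0) (n : ℕ) (k : ι) :
    (n : ℝ≥0∞) * (a k i * (a i j * x j)) ≤ x k := by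
  classical
  induction n generalizing k with
  | zero => simp
  | succ n ih =>
    set c := a i j * x j
    have hpointwise : ∀ p, a k p * ((n : ℝ≥0∞) * c * a p i) + (if p = j then a k p * x p else 0)
        ≤ a k p * x p := by
      intro p
      by_cases hp : p = j
      · subst hp; simp [hji]
      · simpa [hp, mul_comm, mul_left_comm, mul_assoc] using
          mul_le_mul_right (ih p) (a k p)
    have hkj : a k i * a i j ≤ a k j := (ha k j) ▸ ENNReal.le_tsum (f := fun p => a k p * a p j) i
    calc ((n + 1 : ℕ) : ℝ≥0∞) * (a k i * c)
        = (n : ℝ≥0∞) * c * a k i + a k i * a i j * x j := by push_cast; ring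
      _ ≤ (n : ℝ≥0∞) * c * a k i + a k j * x j := by gcongr
      _ = ∑' p, (a k p * ((n : ℝ≥0∞) * c * a p i) + (if p = j then a k p * x p else 0)) := by
        rw [ENNReal.tsum_add, tsum_ite_eq j, ← ha k i, ← ENNReal.tsum_mul_left]
        simp only [mul_left_comm]
      _ ≤ ∑' p, a k p * x p := ENNReal.tsum_le_tsum hpointwise
      _ = x k := hx k

theorem apply_ne_zero_of_idempotent_of_apply_ne_zero
    (ha : ∀ k l, ∑' p, a k p * a p l = a k l) (hx : ∀ k, ∑' p, a k p * x p = x k)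
    {i j k : ι} (hxk : x k ≠ ∞) (hxj : x j ≠ 0) (hki : a k i ≠ 0) (hij : a i j ≠ 0) :
    a j i ≠ 0 := by
  intro hji
  obtain ⟨n, hn⟩ := ENNReal.exists_nat_mul_gt (mul_ne_zero hki (mul_ne_zero hij hxj)) hxk
  exact (nat_mul_le_of_idempotent_of_apply_eq_zero ha hx hji n k).not_gt hn

end IdempotentMatrix

theorem coe_eq_zero_iff_eq_uZero (r : UnitI) : ((r.1 : ℝ≥0∞) = 0) ↔ r = uZero := by
  rw [ENNReal.coe_eq_zero]
  exact (Subtype.ext_iff (a1 := r) (a2 := uZero)).symm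

theorem coe_eq_tsum_of_uSum_eq_some {r : ℕ → UnitI} {v : UnitI} (h : uSum r = some v) :
    (v.1 : ℝ≥0∞) = ∑' n, ((r n).1 : ℝ≥0∞) := by
  unfold uSum at h
  split_ifs at h with hle
  cases Option.some.inj h
  exact ENNReal.coe_toNNReal (ne_top_of_le_ne_top ENNReal.one_ne_top hle)

section DualBasis

variable {U : SigmaSemiring UnitI} {M ι : Type} {MM : SigmaModule UnitI U M}

theorem UnitLinearMap.coe_apply_eq_tsum_of_sumIdx (hUzero : U.zero = uZero)
    (hUsum : U.sum = uSum) {φ : M → UnitI} (hφ : UnitLinearMap U MM φ) {f : ι → M} {v : M}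
    (hf : sumIdx MM.toSigmaMonoid f v) :
    ((φ v).1 : ℝ≥0∞) = ∑' i, ((φ (f i)).1 : ℝ≥0∞) := by
  classical
  obtain ⟨emb, hsum⟩ := hf
  set g : ℕ → M := fun n => if h : ∃ i, emb i = n then f h.choose else MM.zero
  have hg_emb : ∀ i, g (emb i) = f i := fun i => by
    have hmem : ∃ i', emb i' = emb i := ⟨i, rfl⟩
    simp only [g, dif_pos hmem, emb.injective hmem.choose_spec]
  have hsupp : Function.support (fun n => ((φ (g n)).1 : ℝ≥0∞)) ⊆ Set.range emb := by
    intro n hn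
    by_contra hnr
    have hgn : g n = MM.zero := dif_neg fun ⟨i, hi⟩ => hnr ⟨i, hi⟩
    exact hn ((coe_eq_zero_iff_eq_uZero _).2 (by rw [hgn, hφ.1, hUzero]))
  have hφsum := hφ.2.1 g v hsum
  rw [hUsum] at hφsum
  rw [coe_eq_tsum_of_uSum_eq_some hφsum, ← emb.injective.tsum_eq hsupp]
  simp only [hg_emb]

variable {e : ι → M} {φ : ι → M → UnitI}

theorem IsDualBasis.coe_apply_eq_tsum (hUzero : U.zero = uZero) (hUsum : U.sum = uSum)
    (hUmul : U.mul = uMul) (hbasis : IsDualBasis U MM e φ) (k : ι) (x : M) :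
    ((φ k x).1 : ℝ≥0∞) = ∑' p, ((φ k (e p)).1 : ℝ≥0∞) * ((φ p x).1 : ℝ≥0∞) := by
  rw [(hbasis.1 k).coe_apply_eq_tsum_of_sumIdx hUzero hUsum (hbasis.2 x)]
  refine tsum_congr fun p => ?_
  rw [(hbasis.1 k).2.2, hUmul, mul_comm]
  exact ENNReal.coe_mul _ _

theorem IsDualBasis.exists_apply_ne_zero (hbasis : IsDualBasis U MM e φ) {x : M}
    (hx : x ≠ MM.zero) : ∃ k, φ k x ≠ U.zero := by
  classical
  by_contra! hall
  obtain ⟨emb, hsum⟩ := hbasis.2 x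
  set g : ℕ → M := fun n => if h : ∃ i, emb i = n
    then MM.smul (φ h.choose x) (e h.choose) else MM.zero
  have hg : ∀ n, g n = MM.zero := fun n => by
    by_cases h : ∃ i, emb i = n
    · simp only [g, dif_pos h, hall, MM.zero_smul']
    · exact dif_neg h
  have hsum_zero := MM.sum_unit g 0 fun n _ => hg n
  rw [hsum] at hsum_zero
  exact hx ((Option.some.inj hsum_zero).trans (hg 0))

theorem IsDualBasis.apply_ne_zero_symm (hUzero : U.zero = uZero) (hUsum : U.sum = uSum)
    (hUmul : U.mul = uMul) (hbasis : IsDualBasis U MM e φ) (he0 : ∀ i, e i ≠ MM.zero)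
    (hφ0 : ∀ i, φ i ≠ fun _ => U.zero) {i j : ι} (hij : φ i (e j) ≠ U.zero) :
    φ j (e i) ≠ U.zero := by
  have hne_zero : ∀ r : UnitI, r ≠ U.zero ↔ (r.1 : ℝ≥0∞) ≠ 0 := fun r => by
    rw [hUzero, ne_eq, ne_eq, coe_eq_zero_iff_eq_uZero]
  obtain ⟨k, hki⟩ := hbasis.exists_apply_ne_zero (he0 i)
  obtain ⟨y, hyj⟩ : ∃ y, φ j y ≠ U.zero := by
    by_contra! hall
    exact hφ0 j (funext hall)
  rw [hne_zero] at hij hki hyj ⊢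
  refine apply_ne_zero_of_idempotent_of_apply_ne_zero (a := fun k l => ((φ k (e l)).1 : ℝ≥0∞))
    (fun k l => (hbasis.coe_apply_eq_tsum hUzero hUsum hUmul k (e l)).symm)
    (fun k => (hbasis.coe_apply_eq_tsum hUzero hUsum hUmul k y).symm)
    ENNReal.coe_ne_top hyj hki hij

end DualBasis

theorem stmt15_general (U : SigmaSemiring UnitI)
    (hUzero : U.zero = uZero)
    (hUsum : U.sum = uSum) (hUmul : U.mul = uMul)
    {M ι : Type}
    (MM : SigmaModule UnitI U M)
    (e : ι → M) (φ : ι → M → UnitI)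
    (hbasis : IsDualBasis U MM e φ)
    (he0 : ∀ i, e i ≠ MM.zero)
    (hφ0 : ∀ i, φ i ≠ fun _ => U.zero)
    (J : Set ι)
    (hJclosed : ∀ j ∈ J, ∀ i, φ i (e j) ≠ U.zero → i ∈ J) :
    ∀ j ∉ J, ∀ i, φ i (e j) ≠ U.zero → i ∉ J :=
  fun j hj i hij hi =>
    hj (hJclosed i hi j (hbasis.apply_ne_zero_symm hUzero hUsum hUmul he0 hφ0 hij))

/-- In a `[0,1]`-module with a countable dual basis (with nonzero basis vectors
and nonzero coordinate functionals), the complement of a closed set of indices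
is closed, where `J` is closed if `j ∈ J` and `φ_i(e_j) ≠ 0` imply `i ∈ J`. -/
theorem stmt15 (U : SigmaSemiring UnitI)
    (hUzero : U.zero = uZero) (hUone : U.one = uOne)
    (hUsum : U.sum = uSum) (hUmul : U.mul = uMul)
    {M ι : Type} [Countable ι]
    (MM : SigmaModule UnitI U M)
    (e : ι → M) (φ : ι → M → UnitI)
    (hbasis : IsDualBasis U MM e φ)
    (he0 : ∀ i, e i ≠ MM.zero)
    (hφ0 : ∀ i, φ i ≠ fun _ => U.zero)
    (J : Set ι)
    (hJclosed : ∀ j ∈ J, ∀ i, φ i (e j) ≠ U.zero → i ∈ J) :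
    ∀ j ∉ J, ∀ i, φ i (e j) ≠ U.zero → i ∉ J :=
  stmt15_general U hUzero hUsum hUmul MM e φ hbasis he0 hφ0 J hJclosed
end

section
/- Let M be a [0,1]-module with a countable dual basis (e_i, φ_i)_{i∈I} such that e_i ≠ 0 and φ_i ≠ 0 for every i ∈ I. Define a relation ≈ on I by i ≈ j iff φ_j(e_i) ≠ 0. Then ≈ is an equivalence relation on I. -/
/-!
Read the coordinates `A i j = φ j (e i)` as a matrix with entries in `[0, ∞]`. Expanding
`e i = ∑ k, φ k (e i) • e k` and applying the σ-linear `φ j` shows `A = A * A`, so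
`A i j * A j k ≤ A i k`, which is transitivity of the support. If `A i i = 0`, splitting
`A x y = ∑ l, A x l * A l y` at `l = i` improves `c * A x i * A i y ≤ A x y` to `c + 1`, so
`A x i * A i y = 0` for all `x, y`; nonzero rows and columns (from `e i ≠ 0`, `φ i ≠ 0`) exclude
this. For symmetry, suppose `A i j ≠ 0` but `A j i = 0`, and let `T = {m | A m i ≠ 0}`, so
`j ∉ T`, and `S x = ∑ l ∈ T, A x l * A l j`. Since `T` is closed under going backwards along the
support, `S i = ∑ m ∈ T, A i m * S m`, while `S m + A m j * A j j ≤ A m j` because `j ∉ T`.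
Together `S i + A j j * S i ≤ S i`, contradicting `0 < S i < ∞`.
-/

open scoped ENNReal

def IsIdempotentKernel {ι : Type*} (A : ι → ι → ℝ≥0∞) : Prop :=
  ∀ x y, ∑' k, A x k * A k y = A x y

namespace IsIdempotentKernel

variable {ι : Type*} {A : ι → ι → ℝ≥0∞}

theorem mul_le (hA : IsIdempotentKernel A) (x k y : ι) : A x k * A k y ≤ A x y :=
  hA x y ▸ ENNReal.le_tsum (f := fun k => A x k * A k y) k

theorem support_trans (hA : IsIdempotentKernel A) {i j k : ι} (hij : A i j ≠ 0)
    (hjk : A j k ≠ 0) : A i k ≠ 0 :=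
  fun hik => mul_ne_zero hij hjk (le_zero_iff.mp (hik ▸ hA.mul_le i j k))

theorem add_one_mul_le_of_diag_eq_zero (hA : IsIdempotentKernel A) {i : ι} (hii : A i i = 0)
    {c : ℝ≥0∞} (hc : ∀ x y, c * (A x i * A i y) ≤ A x y) (x y : ι) :
    (c + 1) * (A x i * A i y) ≤ A x y := by
  classical
  have hterm : ∀ l, (if l = i then A x i * A i y else 0) + c * (A x l * A l i) * A i y
      ≤ A x l * A l y := by
    intro l
    by_cases hl : l = i
    · subst hl; simp [hii]
    · simpa [hl, mul_assoc, mul_left_comm] using mul_le_mul_right (hc l y) (A x l)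
  calc (c + 1) * (A x i * A i y)
      = ∑' l, ((if l = i then A x i * A i y else 0) + c * (A x l * A l i) * A i y) := by
        rw [ENNReal.tsum_add, tsum_ite_eq, ENNReal.tsum_mul_right, ENNReal.tsum_mul_left, hA]
        ring
    _ ≤ ∑' l, A x l * A l y := ENNReal.tsum_le_tsum hterm
    _ = A x y := hA x y

theorem diag_ne_zero (hA : IsIdempotentKernel A) (hfin : ∀ x y, A x y ≠ ⊤) {h i m : ι}
    (hhi : A h i ≠ 0) (him : A i m ≠ 0) : A i i ≠ 0 := by
  intro hii
  have hbound : ∀ n : ℕ, ∀ x y, (n : ℝ≥0∞) * (A x i * A i y) ≤ A x y := by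
    intro n
    induction n with
    | zero => simp
    | succ n ih => exact_mod_cast hA.add_one_mul_le_of_diag_eq_zero hii ih
  obtain ⟨n, hn⟩ := ENNReal.exists_nat_mul_gt (mul_ne_zero hhi him) (hfin h m)
  exact (hn.trans_le (hbound n h m)).false

theorem support_symm (hA : IsIdempotentKernel A) (hfin : ∀ x y, A x y ≠ ⊤) {i j : ι}
    (hij : A i j ≠ 0) (hii : A i i ≠ 0) (hjj : A j j ≠ 0) : A j i ≠ 0 := by
  intro hji
  let T : Set ι := {m | A m i ≠ 0}
  have hjT : j ∉ T := fun h => h hji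
  let S : ι → ℝ≥0∞ := fun x => ∑' l : T, A x l * A l j
  have hS_eq : ∀ x, S x = ∑' m, A x m * S m := fun x => by
    calc S x = ∑' l : T, ∑' m, A x m * (A m l * A l j) := tsum_congr fun l => by
            rw [← hA x l, ← ENNReal.tsum_mul_right]
            simp only [mul_assoc]
      _ = ∑' m, A x m * S m := by
            rw [ENNReal.tsum_comm]
            simp only [ENNReal.tsum_mul_left, S]
  have hS_compl : ∀ m ∉ T, S m = 0 := fun m hm =>
    ENNReal.tsum_eq_zero.mpr fun l =>
      mul_eq_zero.mpr (Or.inl (by_contra fun hml => hm (hA.support_trans hml l.2)))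
  have hS_restrict : S i = ∑' m : T, A i m * S m := by
    refine (hS_eq i).trans (tsum_subtype_eq_of_support_subset fun m hm => ?_).symm
    by_contra hmT
    exact hm (by simp only [hS_compl m hmT, mul_zero])
  have hS_add_le : ∀ m, S m + A m j * A j j ≤ A m j := fun m => by
    calc S m + A m j * A j j ≤ S m + ∑' l : ↑Tᶜ, A m l * A l j :=
          add_le_add_right (ENNReal.le_tsum (f := fun l : ↑Tᶜ => A m l * A l j) ⟨j, hjT⟩) _
      _ = A m j := (ENNReal.summable.tsum_add_tsum_compl ENNReal.summable).trans (hA m j)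
  have hSi_ne_zero : S i ≠ 0 := fun h0 =>
    mul_ne_zero hii hij (ENNReal.tsum_eq_zero.mp h0 ⟨i, hii⟩)
  have hSi_ne_top : S i ≠ ⊤ := ne_top_of_le_ne_top (hfin i j) (le_self_add.trans (hS_add_le i))
  have hgrow : S i + A j j * S i ≤ S i :=
    calc S i + A j j * S i = ∑' m : T, A i m * (S m + A m j * A j j) := by
          rw [← ENNReal.tsum_mul_left, hS_restrict, ← ENNReal.tsum_add]
          exact tsum_congr fun m => by ring
      _ ≤ ∑' m : T, A i m * A m j := ENNReal.tsum_le_tsum fun m => mul_le_mul_right (hS_add_le m) _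
  exact (ENNReal.lt_add_right hSi_ne_top (mul_ne_zero hjj hSi_ne_zero)).not_ge hgrow

theorem equivalence_support (hA : IsIdempotentKernel A) (hfin : ∀ x y, A x y ≠ ⊤)
    (hrow : ∀ i, ∃ m, A i m ≠ 0) (hcol : ∀ i, ∃ h, A h i ≠ 0) :
    Equivalence fun i j => A i j ≠ 0 :=
  have hdiag : ∀ i, A i i ≠ 0 := fun i =>
    let ⟨_, hh⟩ := hcol i
    let ⟨_, hm⟩ := hrow i
    hA.diag_ne_zero hfin hh hm
  ⟨hdiag, fun hij => hA.support_symm hfin hij (hdiag _) (hdiag _), hA.support_trans⟩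

end IsIdempotentKernel

namespace UnitI

def toENNReal (r : UnitI) : ℝ≥0∞ := (r.1 : ℝ≥0∞)

theorem toENNReal_ne_top (r : UnitI) : r.toENNReal ≠ ⊤ := ENNReal.coe_ne_top

theorem toENNReal_eq_zero_iff {r : UnitI} : r.toENNReal = 0 ↔ r = uZero :=
  ENNReal.coe_eq_zero.trans (Subtype.ext_iff (a1 := r) (a2 := uZero)).symm

theorem toENNReal_uMul (a b : UnitI) : (uMul a b).toENNReal = a.toENNReal * b.toENNReal := by
  simp [toENNReal, uMul]

theorem tsum_toENNReal_of_uSum_eq_some {r : ℕ → UnitI} {v : UnitI} (h : uSum r = some v) :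
    ∑' n, (r n).toENNReal = v.toENNReal := by
  unfold uSum at h
  split_ifs at h with hle
  rw [← Option.some.inj h]
  exact (ENNReal.coe_toNNReal (ne_top_of_le_ne_top ENNReal.one_ne_top hle)).symm

end UnitI

theorem SigmaMonoid.eq_zero_of_sumIdx {M ι : Type} (S : SigmaMonoid M) {f : ι → M} {v : M}
    (h : sumIdx S f v) (hf : ∀ i, f i = S.zero) : v = S.zero := by
  classical
  obtain ⟨emb, hsum⟩ := h
  have hzero : (fun n => if h : ∃ i, emb i = n then f h.choose else S.zero) = fun _ => S.zero :=
    funext fun n => by split_ifs <;> simp [hf]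
  rw [hzero, S.sum_unit _ 0 fun _ _ => rfl] at hsum
  exact (Option.some.inj hsum).symm

theorem UnitLinearMap.tsum_toENNReal_of_sumIdx {U : SigmaSemiring UnitI}
    (hUzero : U.zero = uZero) (hUsum : U.sum = uSum) {M ι : Type}
    {MM : SigmaModule UnitI U M} {φ : M → UnitI} (hφ : UnitLinearMap U MM φ) {f : ι → M} {v : M}
    (h : sumIdx MM.toSigmaMonoid f v) : ∑' i, (φ (f i)).toENNReal = (φ v).toENNReal := by
  classical
  obtain ⟨emb, hsum⟩ := h
  rw [← UnitI.tsum_toENNReal_of_uSum_eq_some (hUsum ▸ hφ.2.1 _ _ hsum),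
    ← tsum_extend_zero emb.injective]
  refine tsum_congr fun n => ?_
  rw [Function.extend_def]
  split_ifs
  · rfl
  · rw [hφ.1, hUzero, Pi.zero_apply, UnitI.toENNReal_eq_zero_iff.mpr rfl]

namespace IsDualBasis

variable {U : SigmaSemiring UnitI} {M ι : Type} {MM : SigmaModule UnitI U M}
  {e : ι → M} {φ : ι → M → UnitI}

theorem toENNReal_coord_eq_tsum (hUzero : U.zero = uZero) (hUsum : U.sum = uSum)
    (hUmul : U.mul = uMul) (hb : IsDualBasis U MM e φ) (x : M) (j : ι) :
    (φ j x).toENNReal = ∑' i, (φ i x).toENNReal * (φ j (e i)).toENNReal := by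
  rw [← (hb.1 j).tsum_toENNReal_of_sumIdx hUzero hUsum (hb.2 x)]
  simp only [(hb.1 j).2.2, hUmul, UnitI.toENNReal_uMul]

theorem isIdempotentKernel (hUzero : U.zero = uZero) (hUsum : U.sum = uSum)
    (hUmul : U.mul = uMul) (hb : IsDualBasis U MM e φ) :
    IsIdempotentKernel fun i j => (φ j (e i)).toENNReal := fun x y =>
  (hb.toENNReal_coord_eq_tsum hUzero hUsum hUmul (e x) y).symm

theorem exists_coord_ne_zero (hb : IsDualBasis U MM e φ) {x : M} (hx : x ≠ MM.zero) :
    ∃ i, φ i x ≠ U.zero := by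
  by_contra! hcoord
  exact hx (MM.eq_zero_of_sumIdx (hb.2 x) fun i => by rw [hcoord i, MM.zero_smul'])

theorem exists_coord_basis_ne_zero (hUzero : U.zero = uZero) (hUsum : U.sum = uSum)
    (hUmul : U.mul = uMul) (hb : IsDualBasis U MM e φ) {j : ι} (hj : φ j ≠ fun _ => U.zero) :
    ∃ i, φ j (e i) ≠ U.zero := by
  obtain ⟨x, hx⟩ := Function.ne_iff.mp hj
  rw [ne_eq, hUzero, ← UnitI.toENNReal_eq_zero_iff, hb.toENNReal_coord_eq_tsum hUzero hUsum hUmul,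
    ENNReal.tsum_eq_zero] at hx
  push Not at hx
  obtain ⟨i, hi⟩ := hx
  exact ⟨i, hUzero ▸ mt UnitI.toENNReal_eq_zero_iff.mpr (right_ne_zero_of_mul hi)⟩

end IsDualBasis

theorem stmt16_general (U : SigmaSemiring UnitI)
    (hUzero : U.zero = uZero)
    (hUsum : U.sum = uSum) (hUmul : U.mul = uMul)
    {M ι : Type}
    (MM : SigmaModule UnitI U M)
    (e : ι → M) (φ : ι → M → UnitI)
    (hbasis : IsDualBasis U MM e φ)
    (he0 : ∀ i, e i ≠ MM.zero)
    (hφ0 : ∀ i, φ i ≠ fun _ => U.zero) :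
    Equivalence (fun i j : ι => φ j (e i) ≠ U.zero) := by
  have hsupport : ∀ i j, φ j (e i) ≠ U.zero ↔ (φ j (e i)).toENNReal ≠ 0 := fun i j => by
    rw [hUzero, ne_eq, ne_eq, UnitI.toENNReal_eq_zero_iff]
  simpa only [hsupport] using (hbasis.isIdempotentKernel hUzero hUsum hUmul).equivalence_support
    (fun _ _ => UnitI.toENNReal_ne_top _)
    (fun i => (hbasis.exists_coord_ne_zero (he0 i)).imp fun m => (hsupport i m).mp)
    (fun j => (hbasis.exists_coord_basis_ne_zero hUzero hUsum hUmul (hφ0 j)).imp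
      fun h => (hsupport h j).mp)

/-- In a `[0,1]`-module with a countable dual basis (with nonzero basis vectors
and nonzero coordinate functionals), the relation `i ≈ j iff φ_j(e_i) ≠ 0` is
an equivalence relation on the index set. -/
theorem stmt16 (U : SigmaSemiring UnitI)
    (hUzero : U.zero = uZero) (hUone : U.one = uOne)
    (hUsum : U.sum = uSum) (hUmul : U.mul = uMul)
    {M ι : Type} [Countable ι]
    (MM : SigmaModule UnitI U M)
    (e : ι → M) (φ : ι → M → UnitI)
    (hbasis : IsDualBasis U MM e φ)
    (he0 : ∀ i, e i ≠ MM.zero)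
    (hφ0 : ∀ i, φ i ≠ fun _ => U.zero) :
    Equivalence (fun i j : ι => φ j (e i) ≠ U.zero) :=
  stmt16_general U hUzero hUsum hUmul MM e φ hbasis he0 hφ0
end
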